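/- arXiv:1701.06535 — 11 statements merged into one kernel-verified Lean document; each statement's English description precedes it below -/
import Mathlib

section
/- Let n be a positive integer, M an n×n real matrix, and P an n×n real symmetric positive definite matrix. If M P Mᵀ ⪯ P in the Loewner order (i.e., P − M P Mᵀ is positive semidefinite), then every eigenvalue λ ∈ ℂ of M (i.e., of the complex matrix obtained by mapping the entries of M into ℂ) satisfies |λ| ≤ 1. -/
/-!
Take a left eigenvector `x` of `M` for `λ`, i.e. `Mᴴ x = λ̄ x`. The quadratic form of
`P - M P Mᴴ` at `x` is `(1 - |λ|²) xᴴ P x`; it is nonnegative while `xᴴ P x > 0`, so `|λ| ≤ 1`.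
Working with complex vectors requires the real matrices `P` and `P - M P Mᵀ` to stay
positive (semi)definite over `ℂ`, which follows from writing a real positive semidefinite
matrix as a sum of rank-one matrices `v vᵀ`.
-/

open Matrix
open scoped ComplexOrder

section

variable {n : Type*} [Fintype n] {𝕜 : Type*} [RCLike 𝕜]

theorem Matrix.PosSemidef.map_algebraMap_real {Q : Matrix n n ℝ} (hQ : Q.PosSemidef) :
    (Q.map (algebraMap ℝ 𝕜)).PosSemidef := by
  classical
  obtain ⟨m, v, rfl⟩ := posSemidef_iff_eq_sum_vecMulVec.mp hQ
  have map_vecMulVec (i : Fin m) : (vecMulVec (v i) (star (v i))).map (algebraMap ℝ 𝕜) =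
      vecMulVec (algebraMap ℝ 𝕜 ∘ v i) (star (algebraMap ℝ 𝕜 ∘ v i)) := by
    ext; simp [vecMulVec_apply]
  rw [← RingHom.mapMatrix_apply, map_sum]
  refine posSemidef_sum _ fun i _ => ?_
  rw [RingHom.mapMatrix_apply, map_vecMulVec]
  exact posSemidef_vecMulVec_self_star _

theorem Matrix.PosDef.map_algebraMap_real [DecidableEq n] {Q : Matrix n n ℝ} (hQ : Q.PosDef) :
    (Q.map (algebraMap ℝ 𝕜)).PosDef := by
  rw [hQ.posSemidef.map_algebraMap_real.posDef_iff_det_ne_zero, ← RingHom.mapMatrix_apply,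
    ← RingHom.map_det, map_ne_zero]
  exact hQ.det_pos.ne'

theorem Matrix.star_dotProduct_mul_mul_conjTranspose_mulVec {R : Type*} [CommRing R] [StarRing R]
    (A Q : Matrix n n R) {μ : R} {x : n → R} (hx : Aᴴ *ᵥ x = μ • x) :
    star x ⬝ᵥ (A * Q * Aᴴ) *ᵥ x = star μ * μ * (star x ⬝ᵥ Q *ᵥ x) := by
  have hx' : star x ᵥ* A = star μ • star x := by
    rw [← conjTranspose_conjTranspose A, ← star_mulVec, hx, star_smul]
  rw [← mulVec_mulVec, ← mulVec_mulVec, hx, dotProduct_mulVec, hx', mulVec_smul, smul_dotProduct,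
    dotProduct_smul, smul_eq_mul, smul_eq_mul, mul_assoc]

theorem Matrix.exists_conjTranspose_mulVec_eq_of_mem_spectrum [DecidableEq n] {A : Matrix n n 𝕜}
    {μ : 𝕜} (hμ : μ ∈ spectrum 𝕜 A) : ∃ x : n → 𝕜, x ≠ 0 ∧ Aᴴ *ᵥ x = star μ • x := by
  have hstar : star μ ∈ spectrum 𝕜 Aᴴ := by
    rw [← star_eq_conjTranspose, spectrum.map_star]
    simpa using hμ
  rw [← spectrum_toLin', ← Module.End.hasEigenvalue_iff_mem_spectrum] at hstar
  obtain ⟨x, hx⟩ := hstar.exists_hasEigenvector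
  exact ⟨x, hx.2, by simpa using hx.apply_eq_smul⟩

theorem Matrix.norm_le_one_of_mem_spectrum_of_posSemidef_sub_mul_mul_conjTranspose
    [DecidableEq n] {A Q : Matrix n n 𝕜} (hQ : Q.PosDef) (h : (Q - A * Q * Aᴴ).PosSemidef)
    {μ : 𝕜} (hμ : μ ∈ spectrum 𝕜 A) : ‖μ‖ ≤ 1 := by
  obtain ⟨x, hx0, hx⟩ := exists_conjTranspose_mulVec_eq_of_mem_spectrum hμ
  obtain ⟨q, hq, hqx⟩ := RCLike.pos_iff_exists_ofReal.mp (hQ.dotProduct_mulVec_pos hx0)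
  have hform : star x ⬝ᵥ (Q - A * Q * Aᴴ) *ᵥ x = ((1 - ‖μ‖ ^ 2) * q : ℝ) := by
    rw [sub_mulVec, dotProduct_sub, star_dotProduct_mul_mul_conjTranspose_mulVec A Q hx, ← hqx,
      star_star, RCLike.star_def, RCLike.mul_conj]
    push_cast
    ring
  have hnonneg : 0 ≤ (1 - ‖μ‖ ^ 2) * q := by
    rw [← RCLike.ofReal_nonneg (K := 𝕜), ← hform]
    exact h.dotProduct_mulVec_nonneg x
  have hsq : ‖μ‖ ^ 2 ≤ 1 := sub_nonneg.mp (nonneg_of_mul_nonneg_left hnonneg hq)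
  exact (sq_le_one_iff₀ (norm_nonneg μ)).mp hsq

end

theorem stmt_0_general (n : ℕ) (M P : Matrix (Fin n) (Fin n) ℝ)
    (hP : P.PosDef)
    (h : (P - M * P * Mᵀ).PosSemidef)
    (lam : ℂ) (hlam : lam ∈ spectrum ℂ (M.map (algebraMap ℝ ℂ))) :
    ‖lam‖ ≤ 1 := by
  refine norm_le_one_of_mem_spectrum_of_posSemidef_sub_mul_mul_conjTranspose
    hP.map_algebraMap_real ?_ hlam
  have hconj : (M.map (algebraMap ℝ ℂ))ᴴ = Mᵀ.map (algebraMap ℝ ℂ) := by ext; simp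
  rw [hconj]
  simpa only [← RingHom.mapMatrix_apply, map_sub, map_mul] using h.map_algebraMap_real (𝕜 := ℂ)

/-- Lyapunov-type lemma: if `M P Mᵀ ⪯ P` for a symmetric positive definite `P`,
then every (complex) eigenvalue of `M` has modulus at most `1`. -/
theorem stmt_0 (n : ℕ) (hn : 0 < n) (M P : Matrix (Fin n) (Fin n) ℝ)
    (hPsymm : P.IsSymm) (hP : P.PosDef)
    (h : (P - M * P * Mᵀ).PosSemidef)
    (lam : ℂ) (hlam : lam ∈ spectrum ℂ (M.map (algebraMap ℝ ℂ))) :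
    ‖lam‖ ≤ 1 :=
  stmt_0_general n M P hP h lam hlam
end

section
/- Let A be an n×n real matrix, G an m×n real matrix, and p ≥ 0 a real number. Suppose λ ∈ ℂ and x ∈ ℂⁿ with x ≠ 0 satisfy A x = λ x and G x = 0 (where A and G act on ℂⁿ via their entrywise complexifications). If there exist an n×m real matrix L and an n×n real symmetric positive definite matrix P such that p · (A − L G) P (A − L G)ᵀ ≺ P in the Loewner order, then p · |λ|² < 1. -/
open Matrix

lemma re_quad_complexify {n : ℕ} (M : Matrix (Fin n) (Fin n) ℝ) (z : Fin n → ℂ) :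
    (star z ⬝ᵥ (M.map (algebraMap ℝ ℂ)).mulVec z).re
      = (fun i => (z i).re) ⬝ᵥ M.mulVec (fun i => (z i).re)
        + (fun i => (z i).im) ⬝ᵥ M.mulVec (fun i => (z i).im) := by
  simp only [dotProduct, mulVec, Pi.star_apply, map, of_apply]
  rw [Complex.re_sum]
  simp only [Complex.mul_re, Complex.re_sum, Complex.im_sum, Complex.mul_re, Complex.mul_im,
    Complex.conj_re, Complex.conj_im, Complex.coe_algebraMap, Complex.ofReal_re, Complex.ofReal_im,
    RCLike.star_def, mul_zero, zero_mul, sub_zero, add_zero, zero_add, mul_comm]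
  rw [← Finset.sum_add_distrib]
  apply Finset.sum_congr rfl
  intro i _
  ring

lemma posdef_complexify {n : ℕ} {M : Matrix (Fin n) (Fin n) ℝ} (hM : M.PosDef)
    (z : Fin n → ℂ) (hz : z ≠ 0) :
    0 < (star z ⬝ᵥ (M.map (algebraMap ℝ ℂ)).mulVec z).re := by
  rw [re_quad_complexify]
  by_cases ha : (fun i => (z i).re) = 0
  · have hb : (fun i => (z i).im) ≠ 0 := by
      intro hb
      apply hz
      funext i
      have h1 := congrFun ha i
      have h2 := congrFun hb i
      simp only [Pi.zero_apply] at h1 h2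
      exact Complex.ext h1 h2
    have := hM.dotProduct_mulVec_pos hb; rw [star_trivial] at this
    have h0 : (fun i => (z i).re) ⬝ᵥ M.mulVec (fun i => (z i).re) = 0 := by
      rw [ha]; simp
    linarith
  · have h1 := hM.dotProduct_mulVec_pos ha; rw [star_trivial] at h1
    have h2 := hM.posSemidef.dotProduct_mulVec_nonneg (fun i => (z i).im); rw [star_trivial] at h2
    linarith

lemma mulVec_star_real {n : ℕ} (R : Matrix (Fin n) (Fin n) ℝ) (z : Fin n → ℂ) :
    (R.map (algebraMap ℝ ℂ)) *ᵥ (star z) = star ((R.map (algebraMap ℝ ℂ)) *ᵥ z) := by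
  funext i
  simp only [mulVec, dotProduct, Pi.star_apply, map_apply, RCLike.star_def, map_sum,
    _root_.map_mul, Complex.coe_algebraMap, Complex.conj_ofReal]

/-- If `λ` is an eigenvalue of `A` whose eigenvector is unobservable through `G`
(`A x = λ x`, `G x = 0`, `x ≠ 0`), and there exist an output-injection gain `L` and a
symmetric positive definite `P` with `p • (A - L G) P (A - L G)ᵀ ≺ P`, then `p |λ|² < 1`. -/
theorem stmt_2 (n m : ℕ) (A : Matrix (Fin n) (Fin n) ℝ) (G : Matrix (Fin m) (Fin n) ℝ)
    (p : ℝ) (hp : 0 ≤ p)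
    (lam : ℂ) (x : Fin n → ℂ) (hx : x ≠ 0)
    (hAx : (A.map (algebraMap ℝ ℂ)).mulVec x = lam • x)
    (hGx : (G.map (algebraMap ℝ ℂ)).mulVec x = 0)
    (hexists : ∃ (L : Matrix (Fin n) (Fin m) ℝ) (P : Matrix (Fin n) (Fin n) ℝ),
      P.IsSymm ∧ P.PosDef ∧
      (P - p • ((A - L * G) * P * (A - L * G)ᵀ)).PosDef) :
    p * ‖lam‖ ^ 2 < 1 := by
  obtain ⟨L, P, hPs, hPpd, hMpd⟩ := hexists
  set F : Matrix (Fin n) (Fin n) ℝ := A - L * G with hF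
  set f := algebraMap ℝ ℂ with hf_def
  -- closed loop eigen relation
  have hFx : (F.map f).mulVec x = lam • x := by
    rw [hF, Matrix.map_sub _ (map_sub f), Matrix.map_mul, sub_mulVec, ← mulVec_mulVec, hGx, mulVec_zero,
      sub_zero, hAx]
  -- determinant vanishes
  have hdet : ((F.map f) - lam • 1).det = 0 := by
    rw [← Matrix.exists_mulVec_eq_zero_iff]
    exact ⟨x, hx, by rw [sub_mulVec, hFx, smul_mulVec, one_mulVec, sub_self]⟩
  have hdetT : ((Fᵀ.map f) - lam • 1).det = 0 := by
    have : (Fᵀ.map f) - lam • 1 = ((F.map f) - lam • 1)ᵀ := by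
      rw [Matrix.transpose_map, transpose_sub, transpose_smul, transpose_one]
    rw [this, det_transpose, hdet]
  obtain ⟨z, hz, hzeq⟩ := (Matrix.exists_mulVec_eq_zero_iff).2 hdetT
  have hFTz : (Fᵀ.map f).mulVec z = lam • z := by
    have := hzeq
    rwa [sub_mulVec, smul_mulVec, one_mulVec, sub_eq_zero] at this
  set M : Matrix (Fin n) (Fin n) ℝ := P - p • (F * P * Fᵀ) with hM
  have hq := posdef_complexify hPpd z hz
  have hm := posdef_complexify hMpd z hz
  set q : ℂ := star z ⬝ᵥ (P.map f) *ᵥ z with hqdef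
  have hmap : M.map f = P.map f - (p : ℂ) • ((F.map f) * (P.map f) * (Fᵀ.map f)) := by
    ext i j
    have hfp : ∀ r : ℝ, f r = (r : ℂ) := fun r => rfl
    simp [hM, Matrix.map_apply, Matrix.sub_apply, Matrix.smul_apply, mul_apply,
      Finset.mul_sum, mul_assoc, hfp]
  have h2 : (M.map f) *ᵥ z
      = (P.map f) *ᵥ z - (p : ℂ) • (lam • ((F.map f) *ᵥ ((P.map f) *ᵥ z))) := by
    rw [hmap, sub_mulVec, smul_mulVec, ← mulVec_mulVec, ← mulVec_mulVec, hFTz,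
      mulVec_smul, mulVec_smul]
  have h3 : star z ⬝ᵥ (F.map f) *ᵥ ((P.map f) *ᵥ z) = (starRingEnd ℂ) lam * q := by
    rw [dotProduct_mulVec, ← Matrix.mulVec_transpose, ← Matrix.transpose_map, hf_def,
      mulVec_star_real, ← hf_def, hFTz, star_smul, smul_dotProduct, hqdef]
    rfl
  have hc : star z ⬝ᵥ (M.map f) *ᵥ z
      = q - (p : ℂ) * (lam * ((starRingEnd ℂ) lam * q)) := by
    rw [h2, dotProduct_sub, dotProduct_smul, dotProduct_smul, h3, ← hqdef]
    simp [smul_eq_mul]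
  have hre : (star z ⬝ᵥ (M.map f) *ᵥ z).re = (1 - p * ‖lam‖ ^ 2) * q.re := by
    rw [hc, ← mul_assoc lam, Complex.mul_conj, ← Complex.sq_norm,
      show (p : ℂ) * ((‖lam‖ ^ 2 : ℝ) * q) = ((p * ‖lam‖ ^ 2 : ℝ)) * q by
        push_cast; ring,
      Complex.sub_re, Complex.re_ofReal_mul]
    ring
  rw [hre] at hm
  nlinarith
end

section
/- (Projection/Elimination Lemma.) Let Q be an n×n real symmetric matrix, U an m×n real matrix, and V a q×n real matrix. Then the following are equivalent: (i) there exists an m×q real matrix X such that Q + Uᵀ X V + Vᵀ Xᵀ U is negative definite; (ii) for every nonzero x ∈ ℝⁿ with U x = 0 one has xᵀ Q x < 0, and for every nonzero x ∈ ℝⁿ with V x = 0 one has xᵀ Q x < 0. -/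
open Matrix

attribute [local instance] Matrix.normedAddCommGroup Matrix.normedSpace

lemma ext_mulVec {k n : ℕ} {M N : Matrix (Fin k) (Fin n) ℝ}
    (h : ∀ x, M.mulVec x = N.mulVec x) : M = N := by
  ext i j
  have := congrFun (h (Pi.single j 1)) i
  simpa [Matrix.mulVec_single] using this

lemma exists_proj {k n : ℕ} (B : Matrix (Fin k) (Fin n) ℝ) :
    ∃ P : Matrix (Fin n) (Fin n) ℝ, Pᵀ = P ∧ P * P = P ∧
      (∀ x, B.mulVec (P.mulVec x) = 0) ∧
      (∀ x, B.mulVec x = 0 → P.mulVec x = x) := by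
  classical
  let e : EuclideanSpace ℝ (Fin n) ≃ₗ[ℝ] (Fin n → ℝ) := WithLp.linearEquiv 2 ℝ (Fin n → ℝ)
  let K : Submodule ℝ (EuclideanSpace ℝ (Fin n)) :=
    (LinearMap.ker B.mulVecLin).comap e.toLinearMap
  let T : EuclideanSpace ℝ (Fin n) →ₗ[ℝ] EuclideanSpace ℝ (Fin n) :=
    K.subtype ∘ₗ (K.orthogonalProjection).toLinearMap
  let P : Matrix (Fin n) (Fin n) ℝ :=
    LinearMap.toMatrix' (e.toLinearMap ∘ₗ T ∘ₗ e.symm.toLinearMap)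
  have hPv : ∀ x, P.mulVec x = e (T (e.symm x)) := by
    intro x
    rw [show P.mulVec x = Matrix.toLin' P x from rfl]
    simp [P, Matrix.toLin'_toMatrix']
  have hmem : ∀ x, T x ∈ K := fun x => (K.orthogonalProjection x).2
  have hfix : ∀ x ∈ K, T x = x := by
    intro x hx
    show ((K.orthogonalProjection) x : EuclideanSpace ℝ (Fin n)) = x
    exact Submodule.starProjection_eq_self_iff.2 hx
  have hTsym : ∀ a b : EuclideanSpace ℝ (Fin n),
      (inner ℝ (T a) b : ℝ) = inner ℝ a (T b) :=
    fun a b => Submodule.inner_starProjection_left_eq_right K a b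
  have hesymm : ∀ (x : Fin n → ℝ) (i : Fin n), (e.symm x) i = x i := fun x i => rfl
  have heapp : ∀ (x : EuclideanSpace ℝ (Fin n)) (i : Fin n), (e x) i = x i := fun x i => rfl
  refine ⟨P, ?_, ?_, ?_, ?_⟩
  · -- symmetry
    funext i j
    have h2 : P i j = (T (e.symm (Pi.single j 1)) : EuclideanSpace ℝ (Fin n)) i := by
      have := congrFun (hPv (Pi.single j 1)) i
      simpa [Matrix.mulVec_single, heapp] using this
    have h1 : P j i = (T (e.symm (Pi.single i 1)) : EuclideanSpace ℝ (Fin n)) j := by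
      have := congrFun (hPv (Pi.single i 1)) j
      simpa [Matrix.mulVec_single, heapp] using this
    have key := hTsym (e.symm (Pi.single i 1)) (e.symm (Pi.single j 1))
    rw [PiLp.inner_apply, PiLp.inner_apply] at key
    simp only [RCLike.inner_apply, starRingEnd_apply, star_trivial, hesymm] at key
    rw [Matrix.transpose_apply, h1, h2]
    have l1 : ∑ k, (T (e.symm (Pi.single i 1)) : EuclideanSpace ℝ (Fin n)) k *
          (Pi.single j (1:ℝ) : Fin n → ℝ) k
        = (T (e.symm (Pi.single i 1)) : EuclideanSpace ℝ (Fin n)) j := by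
      simp [Pi.single_apply]
    have l2 : ∑ k, (Pi.single i (1:ℝ) : Fin n → ℝ) k *
          (T (e.symm (Pi.single j 1)) : EuclideanSpace ℝ (Fin n)) k
        = (T (e.symm (Pi.single j 1)) : EuclideanSpace ℝ (Fin n)) i := by
      simp [Pi.single_apply]
    simp only [mul_comm] at key l1 l2
    rw [l1, l2] at key
    rw [key]
  · apply ext_mulVec
    intro x
    rw [← Matrix.mulVec_mulVec, hPv, hPv]
    simp only [LinearEquiv.symm_apply_apply]
    rw [hfix _ (hmem _)]
  · intro x
    rw [hPv]
    have hm : T (e.symm x) ∈ K := hmem _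
    simp only [K, Submodule.mem_comap, LinearMap.mem_ker] at hm
    have : B.mulVecLin (e (T (e.symm x))) = 0 := hm
    simpa [Matrix.mulVecLin] using this
  · intro x hx
    rw [hPv, hfix, LinearEquiv.apply_symm_apply]
    simp only [K, Submodule.mem_comap, LinearMap.mem_ker]
    show B.mulVecLin (e (e.symm x)) = 0
    rw [LinearEquiv.apply_symm_apply]
    simpa [Matrix.mulVecLin] using hx

lemma trace_form {n : ℕ} (Q D : Matrix (Fin n) (Fin n) ℝ) :
    Matrix.trace (Q * (D * Dᵀ)) = ∑ k, (fun i => D i k) ⬝ᵥ Q.mulVec (fun i => D i k) := by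
  simp only [Matrix.trace, Matrix.diag, Matrix.mul_apply, Matrix.transpose_apply,
    dotProduct, Matrix.mulVec, Finset.mul_sum, Finset.sum_mul]
  conv_rhs => rw [Finset.sum_comm]
  refine Finset.sum_congr rfl fun i _ => ?_
  conv_rhs => rw [Finset.sum_comm]
  refine Finset.sum_congr rfl fun j _ => Finset.sum_congr rfl fun k _ => by ring

lemma key_lemma {n m q : ℕ} (Q Z : Matrix (Fin n) (Fin n) ℝ)
    (U : Matrix (Fin m) (Fin n) ℝ) (V : Matrix (Fin q) (Fin n) ℝ)
    (hZ : Z.PosSemidef) (hZ0 : Z ≠ 0) (hUV : V * Z * Uᵀ = 0)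
    (h1 : ∀ x : Fin n → ℝ, x ≠ 0 → U.mulVec x = 0 → x ⬝ᵥ Q.mulVec x < 0)
    (h2 : ∀ x : Fin n → ℝ, x ≠ 0 → V.mulVec x = 0 → x ⬝ᵥ Q.mulVec x < 0) :
    Matrix.trace (Q * Z) < 0 := by
  classical
  obtain ⟨W, hWsa, -, hWW0⟩ := CFC.exists_sqrt_of_isSelfAdjoint_of_quasispectrumRestricts
    hZ.isHermitian (open scoped MatrixOrder in QuasispectrumRestricts.nnreal_of_nonneg hZ.nonneg)
  have hWsym : Wᵀ = W := by
    have : W.IsHermitian := hWsa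
    rwa [Matrix.IsHermitian, Matrix.conjTranspose_eq_transpose_of_trivial] at this
  have hWW : W * W = Z := hWW0
  obtain ⟨P, hPt, hPP, hPk, hPfix⟩ := exists_proj (V * W)
  have hBA : (V * W) * (U * W)ᵀ = 0 := by
    rw [Matrix.transpose_mul, hWsym, Matrix.mul_assoc, ← Matrix.mul_assoc W W Uᵀ, hWW,
      ← Matrix.mul_assoc]
    exact hUV
  have hAP : (U * W) * P = U * W := by
    ext i j
    have hrow : (V * W).mulVec (fun k => (U * W) i k) = 0 := by
      funext l
      show ∑ x, (V * W) l x * (U * W) i x = 0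
      have h0 : ((V * W) * (U * W)ᵀ) l i = 0 := by rw [hBA]; rfl
      rw [← h0, Matrix.mul_apply]
      exact Finset.sum_congr rfl fun x _ => by rw [Matrix.transpose_apply]
    have hfix := congrFun (hPfix _ hrow) j
    show ∑ k, (U * W) i k * P k j = (U * W) i j
    rw [← hfix]
    show ∑ k, (U * W) i k * P k j = ∑ k, P j k * (U * W) i k
    refine Finset.sum_congr rfl fun k _ => ?_
    have hsym : P k j = P j k := congrFun (congrFun hPt j) k
    rw [hsym, mul_comm]
  have hVD : V * (W * P) = 0 := by
    rw [← Matrix.mul_assoc]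
    apply ext_mulVec
    intro x
    rw [← Matrix.mulVec_mulVec, hPk]
    simp
  have hUD2 : U * (W - W * P) = 0 := by
    rw [Matrix.mul_sub, ← Matrix.mul_assoc, hAP, sub_self]
  have hdec : (W * P) * (W * P)ᵀ + (W - W * P) * (W - W * P)ᵀ = Z := by
    rw [Matrix.transpose_mul, Matrix.transpose_sub, Matrix.transpose_mul, hWsym, hPt, ← hWW]
    have h1' : P * (P * W) = P * W := by rw [← Matrix.mul_assoc, hPP]
    have key : W * P * (P * W) = W * (P * W) := by rw [Matrix.mul_assoc, h1']
    rw [Matrix.sub_mul, Matrix.mul_sub, Matrix.mul_sub, key, ← Matrix.mul_assoc W P W]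
    abel
  set D1 := W * P with hD1
  set D2 := W - W * P with hD2
  have htr : Matrix.trace (Q * Z) =
      ∑ k, ((fun i => D1 i k) ⬝ᵥ Q.mulVec (fun i => D1 i k)
        + (fun i => D2 i k) ⬝ᵥ Q.mulVec (fun i => D2 i k)) := by
    rw [← hdec, Matrix.mul_add, Matrix.trace_add, trace_form, trace_form,
      ← Finset.sum_add_distrib]
  -- columns in kernels
  have hcV : ∀ k, V.mulVec (fun i => D1 i k) = 0 := by
    intro k
    funext l
    show ∑ i, V l i * D1 i k = 0
    have : (V * D1) l k = 0 := by rw [hVD]; rfl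
    rw [← this, Matrix.mul_apply]
  have hcU : ∀ k, U.mulVec (fun i => D2 i k) = 0 := by
    intro k
    funext l
    show ∑ i, U l i * D2 i k = 0
    have : (U * D2) l k = 0 := by rw [hUD2]; rfl
    rw [← this, Matrix.mul_apply]
  have hterm1 : ∀ k, (fun i => D1 i k) ⬝ᵥ Q.mulVec (fun i => D1 i k) ≤ 0 := by
    intro k
    by_cases hc : (fun i => D1 i k) = 0
    · rw [hc]; simp
    · exact le_of_lt (h2 _ hc (hcV k))
  have hterm2 : ∀ k, (fun i => D2 i k) ⬝ᵥ Q.mulVec (fun i => D2 i k) ≤ 0 := by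
    intro k
    by_cases hc : (fun i => D2 i k) = 0
    · rw [hc]; simp
    · exact le_of_lt (h1 _ hc (hcU k))
  -- some column of W nonzero
  have hW0 : W ≠ 0 := by
    intro h
    apply hZ0
    rw [← hWW, h, Matrix.mul_zero]
  obtain ⟨i0, k0, hik⟩ : ∃ i k, W i k ≠ 0 := by
    by_contra h
    push_neg at h
    exact hW0 (by ext i j; exact h i j)
  have hstrict : (fun i => D1 i k0) ⬝ᵥ Q.mulVec (fun i => D1 i k0)
      + (fun i => D2 i k0) ⬝ᵥ Q.mulVec (fun i => D2 i k0) < 0 := by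
    have hsum : (fun i => D1 i k0) + (fun i => D2 i k0) = fun i => W i k0 := by
      funext i
      show D1 i k0 + D2 i k0 = W i k0
      rw [hD1, hD2]
      simp [Matrix.sub_apply]
    by_cases hc : (fun i => D1 i k0) = 0
    · have hd : (fun i => D2 i k0) ≠ 0 := by
        intro hd0
        apply hik
        have h' := congrFun hsum i0
        rw [Pi.add_apply, congrFun hc i0, congrFun hd0 i0] at h'
        rw [← h']
        norm_num
      have := h1 _ hd (hcU k0)
      have h10 : (fun i => D1 i k0) ⬝ᵥ Q.mulVec (fun i => D1 i k0) = 0 := by rw [hc]; simp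
      linarith
    · have := h2 _ hc (hcV k0)
      have := hterm2 k0
      linarith
  rw [htr]
  have := Finset.sum_lt_sum (s := (Finset.univ : Finset (Fin n)))
    (f := fun k => (fun i => D1 i k) ⬝ᵥ Q.mulVec (fun i => D1 i k)
        + (fun i => D2 i k) ⬝ᵥ Q.mulVec (fun i => D2 i k))
    (g := fun _ => (0:ℝ))
    (fun k _ => add_nonpos (hterm1 k) (hterm2 k))
    ⟨k0, Finset.mem_univ _, hstrict⟩
  simpa using this

lemma dot_self_pos {n : ℕ} {x : Fin n → ℝ} (hx : x ≠ 0) : 0 < x ⬝ᵥ x := by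
  have h := (dotProduct_self_star_pos_iff (v := x)).2 hx
  simpa using h

lemma negdef_isOpen {n : ℕ} :
    IsOpen {M : Matrix (Fin n) (Fin n) ℝ | ∀ x : Fin n → ℝ, x ≠ 0 → x ⬝ᵥ M.mulVec x < 0} := by
  rcases Nat.eq_zero_or_pos n with hn | hn
  · subst hn
    convert isOpen_univ
    rw [Set.eq_univ_iff_forall]
    intro M x hx
    exact absurd (Subsingleton.elim x 0) hx
  · refine Metric.isOpen_iff.2 ?_
    intro M0 hM0
    -- compact "sphere"
    set S : Set (Fin n → ℝ) := {x | x ⬝ᵥ x = 1} with hS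
    have hScl : IsClosed S := by
      have : Continuous fun v : Fin n → ℝ => v ⬝ᵥ v := by unfold dotProduct; fun_prop
      exact isClosed_eq this continuous_const
    have hSsub : S ⊆ Metric.closedBall 0 1 := by
      intro x hx
      rw [Metric.mem_closedBall, dist_zero_right]
      rw [pi_norm_le_iff_of_nonneg (by norm_num : (0:ℝ) ≤ 1)]
      intro i
      rw [Real.norm_eq_abs, abs_le]
      have hsq : x i * x i ≤ 1 := by
        rw [← hx]
        have : ∀ j ∈ Finset.univ, 0 ≤ x j * x j := fun j _ => mul_self_nonneg _
        exact Finset.single_le_sum this (Finset.mem_univ i)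
      constructor <;> nlinarith
    have hScomp : IsCompact S :=
      (isCompact_closedBall (0 : Fin n → ℝ) 1).of_isClosed_subset hScl hSsub
    have hSne : S.Nonempty := by
      refine ⟨Pi.single ⟨0, hn⟩ 1, ?_⟩
      simp [hS, dotProduct, Pi.single_apply]
    have hcont : ContinuousOn (fun x : Fin n → ℝ => x ⬝ᵥ M0.mulVec x) S := by
      apply Continuous.continuousOn
      simp only [dotProduct, Matrix.mulVec]
      fun_prop
    obtain ⟨x0, hx0S, hx0max⟩ := hScomp.exists_isMaxOn hSne hcont
    rw [isMaxOn_iff] at hx0max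
    set c := x0 ⬝ᵥ M0.mulVec x0 with hc
    have hcneg : c < 0 := by
      apply hM0
      intro h0
      rw [Set.mem_setOf_eq] at hx0S
      rw [h0] at hx0S
      simp [dotProduct] at hx0S
    refine ⟨-c / (n^2 + 1), div_pos (by linarith) (by positivity), ?_⟩
    intro M hM
    rw [Metric.mem_ball] at hM
    intro x hx
    -- normalize
    set r := Real.sqrt (x ⬝ᵥ x) with hr
    have hxx : 0 < x ⬝ᵥ x := dot_self_pos hx
    have hrpos : 0 < r := Real.sqrt_pos.2 hxx
    set y := r⁻¹ • x with hy
    have hyy : y ⬝ᵥ y = 1 := by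
      rw [hy, smul_dotProduct, dotProduct_smul]
      rw [smul_eq_mul, smul_eq_mul, ← mul_assoc]
      rw [hr]
      rw [← Real.sqrt_mul_self (le_of_lt hxx)]
      field_simp
      rw [Real.sq_sqrt (Real.sqrt_nonneg _)]
    have hyS : y ∈ S := hyy
    have hybd : ∀ i, |y i| ≤ 1 := by
      intro i
      have hsq : y i * y i ≤ 1 := by
        rw [← hyy]
        exact Finset.single_le_sum (fun j _ => mul_self_nonneg (y j)) (Finset.mem_univ i)
      rw [abs_le]; constructor <;> nlinarith
    -- bound perturbation
    set D := M - M0 with hD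
    have hDnorm : ‖D‖ < -c / (n^2 + 1) := by
      rw [hD, ← dist_eq_norm]; exact hM
    have hDpert : y ⬝ᵥ D.mulVec y ≤ (n^2 : ℝ) * ‖D‖ := by
      have hterm : ∀ i j : Fin n, y i * (D i j * y j) ≤ ‖D‖ := by
        intro i j
        have h1 : |y i * (D i j * y j)| ≤ ‖D‖ := by
          rw [abs_mul, abs_mul]
          have hd : |D i j| ≤ ‖D‖ := by
            rw [← Real.norm_eq_abs]; exact Matrix.norm_entry_le_entrywise_sup_norm D
          have h0 : (0:ℝ) ≤ ‖D‖ := norm_nonneg _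
          have hmm := mul_le_mul (hybd i) (mul_le_mul hd (hybd j) (abs_nonneg _) h0)
            (mul_nonneg (abs_nonneg _) (abs_nonneg _)) (by norm_num : (0:ℝ) ≤ 1)
          simpa using hmm
        calc y i * (D i j * y j) ≤ |y i * (D i j * y j)| := le_abs_self _
          _ ≤ ‖D‖ := h1
      calc y ⬝ᵥ D.mulVec y = ∑ i, ∑ j, y i * (D i j * y j) := by
            simp [dotProduct, Matrix.mulVec, Finset.mul_sum]
        _ ≤ ∑ i : Fin n, ∑ j : Fin n, ‖D‖ := by
            refine Finset.sum_le_sum fun i _ => Finset.sum_le_sum fun j _ => hterm i j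
        _ = (n^2 : ℝ) * ‖D‖ := by
            simp [Finset.sum_const]
            ring
    have hyM : y ⬝ᵥ M.mulVec y < 0 := by
      have hsplit : y ⬝ᵥ M.mulVec y = y ⬝ᵥ M0.mulVec y + y ⬝ᵥ D.mulVec y := by
        rw [hD, Matrix.sub_mulVec, dotProduct_sub]
        ring
      have hbd := hx0max y hyS
      have hn2 : (0:ℝ) < n^2 + 1 := by positivity
      rw [hsplit]
      have : (n^2:ℝ) * ‖D‖ < (n^2 : ℝ) * (-c / (n^2+1)) ∨ (n^2:ℝ) = 0 := by
        rcases eq_or_lt_of_le (by positivity : (0:ℝ) ≤ (n^2:ℝ)) with h | h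
        · right; exact h.symm
        · left; exact (mul_lt_mul_iff_right₀ h).2 hDnorm
      rcases this with h | h
      · have e : (-c/((n:ℝ)^2+1)) * ((n:ℝ)^2+1) = -c := div_mul_cancel₀ _ (ne_of_gt hn2)
        have hd0 : 0 < -c/((n:ℝ)^2+1) := div_pos (by linarith) hn2
        nlinarith [e, hd0]
      · have hD0 : y ⬝ᵥ D.mulVec y ≤ 0 := le_trans hDpert (by rw [h, zero_mul])
        nlinarith
    -- unscale
    have hxy : x = r • y := by
      rw [hy, smul_smul]
      field_simp
      rw [one_smul]
    rw [hxy, smul_dotProduct, Matrix.mulVec_smul, dotProduct_smul]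
    rw [smul_eq_mul, smul_eq_mul, ← mul_assoc]
    apply mul_neg_of_pos_of_neg
    · positivity
    · exact hyM

-- double sum to trace
lemma dsum_trace {n : ℕ} (S M : Matrix (Fin n) (Fin n) ℝ) :
    ∑ i, ∑ j, M i j * S i j = Matrix.trace (Sᵀ * M) := by
  simp only [Matrix.trace, Matrix.diag, Matrix.mul_apply, Matrix.transpose_apply]
  rw [Finset.sum_comm]
  exact Finset.sum_congr rfl fun i _ => Finset.sum_congr rfl fun j _ => mul_comm _ _

lemma sq_trace_zero {n m : ℕ} (G : Matrix (Fin n) (Fin m) ℝ)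
    (h : Matrix.trace (G * Gᵀ) = 0) : G = 0 := by
  have hsum : ∑ i, ∑ j, G i j * G i j = 0 := by
    rw [← h]
    simp only [Matrix.trace, Matrix.diag, Matrix.mul_apply, Matrix.transpose_apply]
  ext i j
  have h1 : ∀ i ∈ (Finset.univ : Finset (Fin n)), 0 ≤ ∑ j, G i j * G i j :=
    fun i _ => Finset.sum_nonneg fun j _ => mul_self_nonneg _
  have h2 := (Finset.sum_eq_zero_iff_of_nonneg h1).1 hsum i (Finset.mem_univ i)
  have h3 := (Finset.sum_eq_zero_iff_of_nonneg
    (fun j _ => mul_self_nonneg (G i j))).1 h2 j (Finset.mem_univ j)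
  have := mul_self_eq_zero.1 h3
  simpa using this

lemma vecMulVec_mulVec' {n : ℕ} (v w y : Fin n → ℝ) :
    (Matrix.vecMulVec v w).mulVec y = (w ⬝ᵥ y) • v := by
  funext i
  simp only [Matrix.mulVec, dotProduct, Matrix.vecMulVec_apply, Pi.smul_apply,
    smul_eq_mul, Finset.sum_mul, Finset.mul_sum]
  exact Finset.sum_congr rfl fun j _ => by ring

/-- Projection/elimination lemma (Scherer): for symmetric `Q`, there exists `X` with
`Q + Uᵀ X V + Vᵀ Xᵀ U ≺ 0` if and only if the quadratic form of `Q` is negative on the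
kernels of `U` and of `V` (away from zero). -/
theorem stmt_3 (n m q : ℕ) (Q : Matrix (Fin n) (Fin n) ℝ) (hQ : Q.IsSymm)
    (U : Matrix (Fin m) (Fin n) ℝ) (V : Matrix (Fin q) (Fin n) ℝ) :
    (∃ X : Matrix (Fin m) (Fin q) ℝ,
      ∀ x : Fin n → ℝ, x ≠ 0 → x ⬝ᵥ (Q + Uᵀ * X * V + Vᵀ * Xᵀ * U).mulVec x < 0) ↔
    ((∀ x : Fin n → ℝ, x ≠ 0 → U.mulVec x = 0 → x ⬝ᵥ Q.mulVec x < 0) ∧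
     (∀ x : Fin n → ℝ, x ≠ 0 → V.mulVec x = 0 → x ⬝ᵥ Q.mulVec x < 0)) := by
  classical
  constructor
  · rintro ⟨X, hX⟩
    constructor
    · intro x hx hUx
      have h := hX x hx
      rw [Matrix.add_mulVec, Matrix.add_mulVec, dotProduct_add,
        dotProduct_add] at h
      have e1 : x ⬝ᵥ (Uᵀ * X * V).mulVec x = 0 := by
        rw [Matrix.mul_assoc, ← Matrix.mulVec_mulVec, Matrix.dotProduct_mulVec,
          Matrix.vecMul_transpose, hUx, zero_dotProduct]
      have e2 : x ⬝ᵥ (Vᵀ * Xᵀ * U).mulVec x = 0 := by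
        rw [Matrix.mul_assoc, ← Matrix.mulVec_mulVec, ← Matrix.mulVec_mulVec, hUx,
          Matrix.mulVec_zero, Matrix.mulVec_zero, dotProduct_zero]
      rwa [e1, e2, add_zero, add_zero] at h
    · intro x hx hVx
      have h := hX x hx
      rw [Matrix.add_mulVec, Matrix.add_mulVec, dotProduct_add,
        dotProduct_add] at h
      have e1 : x ⬝ᵥ (Uᵀ * X * V).mulVec x = 0 := by
        rw [Matrix.mul_assoc, ← Matrix.mulVec_mulVec, ← Matrix.mulVec_mulVec, hVx,
          Matrix.mulVec_zero, Matrix.mulVec_zero, dotProduct_zero]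
      have e2 : x ⬝ᵥ (Vᵀ * Xᵀ * U).mulVec x = 0 := by
        rw [Matrix.mul_assoc, ← Matrix.mulVec_mulVec, Matrix.dotProduct_mulVec,
          Matrix.vecMul_transpose, hVx, zero_dotProduct]
      rwa [e1, e2, add_zero, add_zero] at h
  · rintro ⟨hU, hV⟩
    by_contra hno
    push_neg at hno
    set N : Set (Matrix (Fin n) (Fin n) ℝ) :=
      {M | ∀ x : Fin n → ℝ, x ≠ 0 → x ⬝ᵥ M.mulVec x < 0} with hN
    set A : Set (Matrix (Fin n) (Fin n) ℝ) :=
      {M | ∃ X : Matrix (Fin m) (Fin q) ℝ, M = Q + Uᵀ * X * V + Vᵀ * Xᵀ * U} with hA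
    have hNconv : Convex ℝ N := by
      intro M1 hM1 M2 hM2 a b ha hb hab
      intro x hx
      have k1 := hM1 x hx
      have k2 := hM2 x hx
      have e : x ⬝ᵥ (a • M1 + b • M2).mulVec x
          = a * (x ⬝ᵥ M1.mulVec x) + b * (x ⬝ᵥ M2.mulVec x) := by
        rw [Matrix.add_mulVec, dotProduct_add, Matrix.smul_mulVec,
          Matrix.smul_mulVec, dotProduct_smul, dotProduct_smul]
        simp
      rw [e]
      rcases eq_or_lt_of_le ha with ha0 | ha0
      · rw [← ha0] at hab ⊢
        simp at hab ⊢
        rw [hab]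
        simpa using k2
      · rcases eq_or_lt_of_le hb with hb0 | hb0
        · rw [← hb0] at hab ⊢
          simp at hab ⊢
          rw [hab]
          simpa using k1
        · have := mul_neg_of_pos_of_neg ha0 k1
          have := mul_neg_of_pos_of_neg hb0 k2
          linarith
    have hAconv : Convex ℝ A := by
      rintro M1 ⟨X1, rfl⟩ M2 ⟨X2, rfl⟩ a b ha hb hab
      refine ⟨a • X1 + b • X2, ?_⟩
      have hQab : a • Q + b • Q = Q := by rw [← add_smul, hab, one_smul]
      simp only [Matrix.transpose_add, Matrix.transpose_smul, Matrix.mul_add, Matrix.add_mul,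
        Matrix.mul_smul, Matrix.smul_mul, smul_add]
      conv_rhs => rw [← hQab]
      abel
    have hdisj : Disjoint N A := by
      rw [Set.disjoint_left]
      rintro M hMN ⟨X, rfl⟩
      obtain ⟨x, hx, hge⟩ := hno X
      exact absurd (hMN x hx) (not_lt.2 hge)
    obtain ⟨f, u, hfN, hfA⟩ := geometric_hahn_banach_open hNconv negdef_isOpen hAconv hdisj
    -- basic consequences
    have hfA' : ∀ X : Matrix (Fin m) (Fin q) ℝ,
        u ≤ f Q + f (Uᵀ * X * V) + f (Vᵀ * Xᵀ * U) := by
      intro X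
      have := hfA _ ⟨X, rfl⟩
      rwa [map_add, map_add] at this
    have hcone : ∀ M ∈ N, ∀ t : ℝ, 0 < t → t * f M < u := by
      intro M hM t ht
      have htM : t • M ∈ N := by
        intro x hx
        rw [Matrix.smul_mulVec, dotProduct_smul, smul_eq_mul]
        exact mul_neg_of_pos_of_neg ht (hM x hx)
      have := hfN _ htM
      rwa [f.map_smul, smul_eq_mul] at this
    have hfN0 : ∀ M ∈ N, f M ≤ 0 := by
      intro M hM
      by_contra hpos
      push_neg at hpos
      have ht : (0:ℝ) < (|u| + 1) / f M := div_pos (by positivity) hpos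
      have := hcone M hM _ ht
      rw [div_mul_cancel₀ _ (ne_of_gt hpos)] at this
      have := le_abs_self u
      linarith
    have hneg1 : (-1 : Matrix (Fin n) (Fin n) ℝ) ∈ N := by
      intro x hx
      rw [Matrix.neg_mulVec, Matrix.one_mulVec, dotProduct_neg]
      have := dot_self_pos hx
      linarith
    have hu0 : 0 ≤ u := by
      by_contra hu
      push_neg at hu
      have hc1 : f (-1) ≤ 0 := hfN0 _ hneg1
      rcases eq_or_lt_of_le hc1 with hc | hc
      · have := hcone _ hneg1 1 one_pos
        rw [one_mul, hc] at this
        linarith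
      · have ht : (0:ℝ) < u / (2 * f (-1)) := div_pos_of_neg_of_neg hu (by linarith)
        have := hcone _ hneg1 _ ht
        have he : u / (2 * f (-1)) * f (-1) = u / 2 := by
          have hcne : f (-1) ≠ 0 := ne_of_lt hc
          rw [map_neg] at hcne ⊢
          have h1ne : f 1 ≠ 0 := fun h => hcne (by rw [h, neg_zero])
          field_simp
        rw [he] at this
        linarith
    -- the matrix Z
    set Z0 : Matrix (Fin n) (Fin n) ℝ :=
      Matrix.of (fun i j => f (Matrix.single i j 1)) with hZ0def
    have hfrepr : ∀ M : Matrix (Fin n) (Fin n) ℝ, f M = ∑ i, ∑ j, M i j * Z0 i j := by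
      intro M
      conv_lhs => rw [Matrix.matrix_eq_sum_single M]
      rw [map_sum]
      refine Finset.sum_congr rfl fun i _ => ?_
      rw [map_sum]
      refine Finset.sum_congr rfl fun j _ => ?_
      have : Matrix.single i j (M i j) = M i j • Matrix.single i j 1 := by
        rw [Matrix.smul_single]
        simp
      rw [this, f.map_smul, smul_eq_mul]
      rfl
    set Z : Matrix (Fin n) (Fin n) ℝ := (1/2 : ℝ) • (Z0 + Z0ᵀ) with hZdef
    have hZt : Zᵀ = Z := by
      rw [hZdef, Matrix.transpose_smul, Matrix.transpose_add, Matrix.transpose_transpose,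
        add_comm]
    have hsymmrepr : ∀ M : Matrix (Fin n) (Fin n) ℝ, Mᵀ = M →
        f M = ∑ i, ∑ j, M i j * Z i j := by
      intro M hM
      have h2 : ∑ i, ∑ j, M i j * Z0ᵀ i j = ∑ i, ∑ j, M i j * Z0 i j := by
        rw [Finset.sum_comm]
        refine Finset.sum_congr rfl fun i _ => Finset.sum_congr rfl fun j _ => ?_
        rw [Matrix.transpose_apply]
        congr 1
        exact congrFun (congrFun hM i) j
      have expand : ∀ i j, M i j * Z i j
          = (1/2) * (M i j * Z0 i j) + (1/2) * (M i j * Z0ᵀ i j) := by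
        intro i j
        rw [hZdef]
        simp only [Matrix.smul_apply, Matrix.add_apply, smul_eq_mul]
        ring
      calc f M = (1/2) * (∑ i, ∑ j, M i j * Z0 i j)
            + (1/2) * (∑ i, ∑ j, M i j * Z0ᵀ i j) := by
            rw [hfrepr M, h2]; ring
        _ = ∑ i, ∑ j, M i j * Z i j := by
            rw [Finset.mul_sum, Finset.mul_sum, ← Finset.sum_add_distrib]
            refine Finset.sum_congr rfl fun i _ => ?_
            rw [Finset.mul_sum, Finset.mul_sum, ← Finset.sum_add_distrib]
            exact Finset.sum_congr rfl fun j _ => (expand i j).symm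
    -- f of symmetric M as trace
    have htrrepr : ∀ M : Matrix (Fin n) (Fin n) ℝ, Mᵀ = M → f M = Matrix.trace (Z * M) := by
      intro M hM
      rw [hsymmrepr M hM, dsum_trace, hZt]
    have hHe : ∀ X : Matrix (Fin m) (Fin q) ℝ,
        f (Uᵀ * X * V) + f (Vᵀ * Xᵀ * U) = 0 := by
      intro X
      by_contra hg
      have hscale : ∀ t : ℝ,
          u ≤ f Q + t * (f (Uᵀ * X * V) + f (Vᵀ * Xᵀ * U)) := by
        intro t
        have h := hfA' (t • X)
        have e1 : Uᵀ * (t • X) * V = t • (Uᵀ * X * V) := by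
          rw [Matrix.mul_smul, Matrix.smul_mul]
        have e2 : Vᵀ * (t • X)ᵀ * U = t • (Vᵀ * Xᵀ * U) := by
          rw [Matrix.transpose_smul, Matrix.mul_smul, Matrix.smul_mul]
        rw [e1, e2, f.map_smul, f.map_smul, smul_eq_mul, smul_eq_mul] at h
        calc u ≤ f Q + t * f (Uᵀ * X * V) + t * f (Vᵀ * Xᵀ * U) := h
          _ = f Q + t * (f (Uᵀ * X * V) + f (Vᵀ * Xᵀ * U)) := by ring
      have h := hscale ((u - f Q - 1) / (f (Uᵀ * X * V) + f (Vᵀ * Xᵀ * U)))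
      rw [div_mul_cancel₀ _ hg] at h
      linarith
    have hG : V * Z * Uᵀ = 0 := by
      apply sq_trace_zero
      set G := V * Z * Uᵀ with hGdef
      have hX := hHe Gᵀ
      have hsum : f (Uᵀ * Gᵀ * V + Vᵀ * Gᵀᵀ * U) = 0 := by
        rw [map_add]; exact hX
      have hsymX : (Uᵀ * Gᵀ * V + Vᵀ * Gᵀᵀ * U)ᵀ = Uᵀ * Gᵀ * V + Vᵀ * Gᵀᵀ * U := by
        simp only [Matrix.transpose_add, Matrix.transpose_mul, Matrix.transpose_transpose,
          ← Matrix.mul_assoc]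
        exact add_comm _ _
      rw [htrrepr _ hsymX, Matrix.mul_add, Matrix.trace_add] at hsum
      have t1 : Matrix.trace (Z * (Uᵀ * Gᵀ * V)) = Matrix.trace (G * Gᵀ) := by
        rw [Matrix.mul_assoc Uᵀ Gᵀ V, ← Matrix.mul_assoc Z Uᵀ (Gᵀ * V),
          ← Matrix.mul_assoc (Z * Uᵀ) Gᵀ V]
        rw [Matrix.trace_mul_cycle]
        have hVG : V * (Z * Uᵀ) = G := by rw [hGdef, Matrix.mul_assoc]
        rw [hVG]
      have t2 : Matrix.trace (Z * (Vᵀ * Gᵀᵀ * U)) = Matrix.trace (G * Gᵀ) := by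
        rw [Matrix.transpose_transpose]
        rw [Matrix.mul_assoc Vᵀ G U, ← Matrix.mul_assoc Z Vᵀ (G * U),
          ← Matrix.mul_assoc (Z * Vᵀ) G U]
        rw [Matrix.trace_mul_cycle]
        have hGt : U * (Z * Vᵀ) = Gᵀ := by
          rw [hGdef, Matrix.transpose_mul, Matrix.transpose_mul, Matrix.transpose_transpose,
            hZt]
        rw [hGt, Matrix.trace_mul_comm]
      rw [t1, t2] at hsum
      linarith
    have hquad : ∀ v : Fin n → ℝ, v ⬝ᵥ Z.mulVec v = f (Matrix.vecMulVec v v) := by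
      intro v
      have hsymvv : (Matrix.vecMulVec v v)ᵀ = Matrix.vecMulVec v v := by
        ext i j
        rw [Matrix.transpose_apply, Matrix.vecMulVec_apply, Matrix.vecMulVec_apply, mul_comm]
      rw [hsymmrepr _ hsymvv]
      simp only [dotProduct, Matrix.mulVec, Matrix.vecMulVec_apply]
      refine Finset.sum_congr rfl fun i _ => ?_
      rw [Finset.mul_sum]
      exact Finset.sum_congr rfl fun j _ => by ring
    have hvvge : ∀ v : Fin n → ℝ, 0 ≤ f (Matrix.vecMulVec v v) := by
      intro v
      have hmem : ∀ ε : ℝ, 0 < ε →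
          (-(Matrix.vecMulVec v v) - ε • 1) ∈ N := by
        intro ε hε y hy
        have hmv : (-(Matrix.vecMulVec v v) - ε • (1 : Matrix (Fin n) (Fin n) ℝ)).mulVec y
            = -((v ⬝ᵥ y) • v) - ε • y := by
          rw [Matrix.sub_mulVec, Matrix.neg_mulVec, vecMulVec_mulVec',
            Matrix.smul_mulVec, Matrix.one_mulVec]
        rw [hmv, dotProduct_sub, dotProduct_neg, dotProduct_smul,
          dotProduct_smul]
        have h2 : y ⬝ᵥ v = v ⬝ᵥ y := dotProduct_comm y v
        rw [smul_eq_mul, smul_eq_mul, h2]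
        have hyy := dot_self_pos hy
        nlinarith [sq_nonneg (v ⬝ᵥ y)]
      have hle : ∀ ε : ℝ, 0 < ε → -(f (Matrix.vecMulVec v v)) - ε * f 1 ≤ 0 := by
        intro ε hε
        have h := hfN0 _ (hmem ε hε)
        rwa [map_sub, map_neg, f.map_smul, smul_eq_mul] at h
      by_contra hneg
      push_neg at hneg
      rcases le_or_gt (f 1) 0 with h1 | h1
      · have := hle 1 one_pos
        linarith
      · have hee := hle (-(f (Matrix.vecMulVec v v)) / (2 * f 1)) (div_pos (by linarith) (by linarith))
        have he : -(f (Matrix.vecMulVec v v)) / (2 * f 1) * f 1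
            = -(f (Matrix.vecMulVec v v)) / 2 := by
          field_simp
        rw [he] at hee
        linarith
    have hZpsd : Z.PosSemidef := by
      refine Matrix.posSemidef_iff_dotProduct_mulVec.mpr ⟨?_, ?_⟩
      · rw [Matrix.IsHermitian, Matrix.conjTranspose_eq_transpose_of_trivial]
        exact hZt
      · intro x
        rw [star_trivial, hquad]
        exact hvvge x
    have hX0 := hfA' 0
    rw [Matrix.mul_zero, Matrix.zero_mul, Matrix.transpose_zero, Matrix.mul_zero,
      Matrix.zero_mul, map_zero] at hX0
    -- hX0 : u ≤ f Q + 0 + 0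
    by_cases hZzero : Z = 0
    · have hfQ : f Q = 0 := by
        rw [htrrepr Q hQ, hZzero, Matrix.zero_mul, Matrix.trace_zero]
      have hfm1 : f (-1) = 0 := by
        rw [htrrepr (-1) (by rw [Matrix.transpose_neg, Matrix.transpose_one]), hZzero,
          Matrix.zero_mul, Matrix.trace_zero]
      have h1 := hfN _ hneg1
      rw [hfm1] at h1
      linarith
    · have hkey := key_lemma Q Z U V hZpsd hZzero hG hU hV
      have hfQ : f Q = Matrix.trace (Q * Z) := by
        rw [htrrepr Q hQ, Matrix.trace_mul_comm]
      linarith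
end

section
/- Let (Ω, 𝓕, ℙ) be a probability space, S a finite nonempty type with the discrete measurable structure, m a natural number, and γ : ℕ → Ω → S a sequence of measurable random variables that are mutually independent and identically distributed. Define the sliding-window process W : ℕ → Ω → (Fin (m+1) → S) by W k ω = (fun i => γ (k + i) ω). Then W is a Markov chain: for every k ∈ ℕ, every w₀, …, w_k, w' : Fin (m+1) → S such that ℙ(⋂_{t ≤ k} {W t = w_t}) > 0 and ℙ({W k = w_k}) > 0, one has ℙ({W (k+1) = w'} ∩ ⋂_{t ≤ k} {W t = w_t}) / ℙ(⋂_{t ≤ k} {W t = w_t}) = ℙ({W (k+1) = w'} ∩ {W k = w_k}) / ℙ({W k = w_k}). -/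
open MeasureTheory ProbabilityTheory

/-- The sliding-window process `W k ω = (γ (k+0) ω, …, γ (k+m) ω)` built from an i.i.d.
sequence `γ` is a (homogeneous) Markov chain: conditioning the next window on the whole
past equals conditioning on the current window only. -/
theorem stmt_4 {Ω : Type*} [MeasurableSpace Ω] (P : Measure Ω) [IsProbabilityMeasure P]
    (S : Type*) [Fintype S] [Nonempty S] [MeasurableSpace S] [MeasurableSingletonClass S]
    (m : ℕ) (γ : ℕ → Ω → S)
    (hmeas : ∀ k, Measurable (γ k))
    (hindep : iIndepFun γ P)
    (hident : ∀ k, IdentDistrib (γ k) (γ 0) P P)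
    (W : ℕ → Ω → (Fin (m + 1) → S))
    (hW : ∀ k ω, W k ω = fun i : Fin (m + 1) => γ (k + i.val) ω)
    (k : ℕ) (w : ℕ → (Fin (m + 1) → S)) (w' : Fin (m + 1) → S)
    (hpos : 0 < P (⋂ t ∈ Finset.Iic k, {ω | W t ω = w t}))
    (hpos' : 0 < P {ω | W k ω = w k}) :
    P ({ω | W (k + 1) ω = w'} ∩ ⋂ t ∈ Finset.Iic k, {ω | W t ω = w t}) /
        P (⋂ t ∈ Finset.Iic k, {ω | W t ω = w t}) =
      P ({ω | W (k + 1) ω = w'} ∩ {ω | W k ω = w k}) / P {ω | W k ω = w k} := by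
  classical
  set A : Set Ω := ⋂ t ∈ Finset.Iic k, {ω | W t ω = w t} with hA
  -- A ⊆ {W k = w k}
  have hAsub : A ⊆ {ω | W k ω = w k} := by
    intro ω hω
    have := Set.mem_iInter₂.1 hω k (Finset.mem_Iic.2 le_rfl)
    exact this
  -- the product formula from independence
  have hprod : ∀ (F : Finset ℕ) (c : ℕ → S),
      P (⋂ j ∈ F, γ j ⁻¹' {c j}) = ∏ j ∈ F, P (γ j ⁻¹' {c j}) := by
    intro F c
    exact hindep.meas_biInter (fun i _ => ⟨{c i}, measurableSet_singleton _, rfl⟩)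
  by_cases hcons : ∀ i : Fin m, w' i.castSucc = w k i.succ
  · -- consistent case
    set n : ℕ := k + 1 + m with hn
    set B : Set Ω := γ n ⁻¹' {w' (Fin.last m)} with hB
    -- key set identity against the current window
    have eq1 : {ω | W (k + 1) ω = w'} ∩ {ω | W k ω = w k} = B ∩ {ω | W k ω = w k} := by
      ext ω
      simp only [Set.mem_inter_iff, Set.mem_setOf_eq, hB, Set.mem_preimage,
        Set.mem_singleton_iff]
      constructor
      · rintro ⟨h1, h2⟩
        refine ⟨?_, h2⟩
        have := congrFun h1 (Fin.last m)
        rw [hW] at this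
        simpa [hn, Fin.last] using this
      · rintro ⟨h1, h2⟩
        refine ⟨?_, h2⟩
        rw [hW]
        funext i
        refine Fin.lastCases ?_ ?_ i
        · simpa [hn, Fin.last] using h1
        · intro j
          have hj : γ (k + (j.succ : Fin (m+1)).val) ω = w k j.succ := by
            rw [hW] at h2; exact congrFun h2 j.succ
          have hidx : k + 1 + (j.castSucc : Fin (m+1)).val = k + (j.succ : Fin (m+1)).val := by
            simp [Fin.coe_castSucc, Fin.val_succ]; omega
          show γ (k + 1 + (j.castSucc : Fin (m+1)).val) ω = w' j.castSucc
          rw [hidx, hj]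
          exact (hcons j).symm
    have eq2 : {ω | W (k + 1) ω = w'} ∩ A = B ∩ A := by
      have h1 : {ω | W (k + 1) ω = w'} ∩ A
          = ({ω | W (k + 1) ω = w'} ∩ {ω | W k ω = w k}) ∩ A := by
        rw [Set.inter_assoc]
        congr 1
        exact (Set.inter_eq_right.2 hAsub).symm
      rw [h1, eq1, Set.inter_assoc, Set.inter_eq_right.2 hAsub]
    -- express A as an intersection of coordinate events
    obtain ⟨ω₀, hω₀⟩ : A.Nonempty := nonempty_of_measure_ne_zero hpos.ne'
    have hω₀W : ∀ t ≤ k, W t ω₀ = w t := fun t ht =>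
      Set.mem_iInter₂.1 hω₀ t (Finset.mem_Iic.2 ht)
    have hAeq : A = ⋂ j ∈ Finset.Iic (k + m), γ j ⁻¹' {γ j ω₀} := by
      ext ω
      simp only [hA, Set.mem_iInter₂, Finset.mem_Iic, Set.mem_setOf_eq, Set.mem_iInter,
        Set.mem_preimage, Set.mem_singleton_iff]
      constructor
      · intro hω j hj
        set t : ℕ := min j k with ht
        have htk : t ≤ k := min_le_right _ _
        have hik : j - t < m + 1 := by omega
        have hti : t + (⟨j - t, hik⟩ : Fin (m+1)).val = j := by simp; omega
        have h1 := congrFun (hω t htk) ⟨j - t, hik⟩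
        have h2 := congrFun (hω₀W t htk) ⟨j - t, hik⟩
        rw [hW] at h1
        rw [hW] at h2
        simp only at h1 h2
        rw [hti] at h1 h2
        rw [h1, h2]
      · intro hω t ht
        rw [hW]
        funext i
        have hjle : t + i.val ≤ k + m := by have := i.isLt; omega
        rw [hω _ hjle]
        have := congrFun (hω₀W t ht) i
        rw [hW] at this
        exact this
    -- express {W k = w k} as an intersection of coordinate events
    set d : ℕ → S := fun j => w k ⟨(j - k) % (m + 1), Nat.mod_lt _ (Nat.succ_pos m)⟩ with hd
    have hWkeq : {ω | W k ω = w k} = ⋂ j ∈ Finset.Icc k (k + m), γ j ⁻¹' {d j} := by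
      ext ω
      simp only [Set.mem_setOf_eq, Set.mem_iInter, Finset.mem_Icc, Set.mem_preimage,
        Set.mem_singleton_iff]
      constructor
      · intro hω j hj
        have hik : j - k < m + 1 := by omega
        have := congrFun hω ⟨j - k, hik⟩
        rw [hW] at this
        simp only at this
        have hti : k + (j - k) = j := by omega
        rw [hti] at this
        rw [this, hd]
        congr 1
        exact Fin.ext (by simp [Nat.mod_eq_of_lt hik])
      · intro hω
        rw [hW]
        funext i
        have hj : k ≤ k + i.val ∧ k + i.val ≤ k + m := ⟨Nat.le_add_right _ _, by have := i.isLt; omega⟩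
        rw [hω _ hj, hd]
        have hfin : (⟨(k + i.val - k) % (m + 1), Nat.mod_lt _ (Nat.succ_pos m)⟩ : Fin (m+1)) = i :=
          Fin.ext (by simp only [Nat.add_sub_cancel_left]; exact Nat.mod_eq_of_lt i.isLt)
        exact congrArg (w k) hfin
    -- extended coordinate value functions
    set cA : ℕ → S := fun j => if j = n then w' (Fin.last m) else γ j ω₀ with hcA
    set cB : ℕ → S := fun j => if j = n then w' (Fin.last m) else d j with hcB
    have hBA : B ∩ A = ⋂ j ∈ Finset.Iic n, γ j ⁻¹' {cA j} := by
      have : Finset.Iic n = insert n (Finset.Iic (k + m)) := by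
        ext x; simp only [Finset.mem_Iic, Finset.mem_insert, hn]; omega
      rw [this, Finset.set_biInter_insert, hAeq]
      congr 1
      · simp [hB, hcA]
      · apply Set.iInter₂_congr
        intro j hj
        have hjn : j ≠ n := by have := Finset.mem_Iic.1 hj; omega
        simp [hcA, hjn]
    have hBWk : B ∩ {ω | W k ω = w k} = ⋂ j ∈ Finset.Icc k n, γ j ⁻¹' {cB j} := by
      have : Finset.Icc k n = insert n (Finset.Icc k (k + m)) := by
        ext x; simp only [Finset.mem_Icc, Finset.mem_insert, hn]; omega
      rw [this, Finset.set_biInter_insert, hWkeq]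
      congr 1
      · simp [hB, hcB]
      · apply Set.iInter₂_congr
        intro j hj
        have hjn : j ≠ n := by have := Finset.mem_Icc.1 hj; omega
        simp [hcB, hjn]
    -- compute both sides
    have hPBA : P (B ∩ A) = P B * P A := by
      rw [hBA, hprod, hAeq, hprod]
      have hsplit : Finset.Iic n = insert n (Finset.Iic (k + m)) := by
        ext x; simp only [Finset.mem_Iic, Finset.mem_insert, hn]; omega
      rw [hsplit, Finset.prod_insert (by simp only [Finset.mem_Iic, hn]; omega)]
      congr 1
      · simp [hB, hcA]
      · apply Finset.prod_congr rfl
        intro j hj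
        have hjn : j ≠ n := by have := Finset.mem_Iic.1 hj; omega
        simp [hcA, hjn]
    have hPBWk : P (B ∩ {ω | W k ω = w k}) = P B * P {ω | W k ω = w k} := by
      rw [hBWk, hprod, hWkeq, hprod]
      have hsplit : Finset.Icc k n = insert n (Finset.Icc k (k + m)) := by
        ext x; simp only [Finset.mem_Icc, Finset.mem_insert, hn]; omega
      rw [hsplit, Finset.prod_insert (by simp only [Finset.mem_Icc, hn, not_and]; omega)]
      congr 1
      · simp [hB, hcB]
      · apply Finset.prod_congr rfl
        intro j hj
        have hjn : j ≠ n := by have := Finset.mem_Icc.1 hj; omega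
        simp [hcB, hjn]
    rw [eq2, eq1, hPBA, hPBWk]
    rw [div_eq_mul_inv, div_eq_mul_inv, mul_assoc, mul_assoc,
      ← div_eq_mul_inv (P A), ← div_eq_mul_inv (P {ω | W k ω = w k}),
      ENNReal.div_self hpos.ne' (measure_ne_top P A),
      ENNReal.div_self hpos'.ne' (measure_ne_top P _)]
  · -- inconsistent case: both numerators vanish
    push_neg at hcons
    obtain ⟨i, hi⟩ := hcons
    have hempty : {ω | W (k + 1) ω = w'} ∩ {ω | W k ω = w k} = ∅ := by
      ext ω
      simp only [Set.mem_inter_iff, Set.mem_setOf_eq, Set.mem_empty_iff_false, iff_false,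
        not_and]
      intro h1 h2
      apply hi
      have e1 : γ (k + 1 + (i.castSucc : Fin (m+1)).val) ω = w' i.castSucc := by
        rw [hW] at h1; exact congrFun h1 i.castSucc
      have e2 : γ (k + (i.succ : Fin (m+1)).val) ω = w k i.succ := by
        rw [hW] at h2; exact congrFun h2 i.succ
      have hidx : k + 1 + (i.castSucc : Fin (m+1)).val = k + (i.succ : Fin (m+1)).val := by
        simp [Fin.coe_castSucc, Fin.val_succ]; omega
      rw [← e1, ← e2, hidx]
    have hempty2 : {ω | W (k + 1) ω = w'} ∩ A = ∅ := by
      apply Set.eq_empty_of_subset_empty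
      rw [← hempty]
      exact fun ω ⟨h1, h2⟩ => ⟨h1, hAsub h2⟩
    rw [hempty, hempty2, measure_empty, ENNReal.zero_div, ENNReal.zero_div]
end

section
/- Let (Ω, 𝓕, ℙ) be a probability space, S a finite nonempty type with the discrete measurable structure, m a natural number, and γ : ℕ → Ω → S a sequence of measurable random variables that are mutually independent and identically distributed with common distribution μ (the law of γ 0). Define the sliding-window process W : ℕ → Ω → (Fin (m+1) → S) by W k ω = (fun i => γ (k + i) ω). Then for every k ∈ ℕ and every w, w' : Fin (m+1) → S with ℙ({W k = w}) > 0: (a) if w' i = w (i+1) for all i < m (i.e., w' is the unit shift of w extended by one new symbol), then ℙ({W (k+1) = w'} ∩ {W k = w}) / ℙ({W k = w}) = μ({w' m}), the probability that γ 0 takes the value of the last entry of w'; and (b) otherwise, ℙ({W (k+1) = w'} ∩ {W k = w}) = 0. In particular, the transition probabilities do not depend on k. -/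
open MeasureTheory ProbabilityTheory

/-!
Knowing the current window `w`, the next window `w'` is forced on its first `m` entries, so the
transition event is either empty or equals `{W k = w} ∩ {γ (k + m + 1) = w' m}`. The new symbol
`γ (k + m + 1)` is independent of the window `W k`, which only involves `γ k, …, γ (k + m)`, so
the conditional probability is the law of `γ (k + m + 1)`, which is `μ` by identical
distribution.
-/

def slidingWindow {S : Type*} (x : ℕ → S) (m k : ℕ) : Fin (m + 1) → S :=
  fun i => x (k + i)

section Shift

variable {S : Type*} (x : ℕ → S) {m k : ℕ}

lemma slidingWindow_apply_add_one {i : Fin (m + 1)} (hi : (i : ℕ) < m) :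
    slidingWindow x m k (i + 1) = slidingWindow x m (k + 1) i := by
  have hval : ((i + 1 : Fin (m + 1)) : ℕ) = i + 1 :=
    Fin.val_add_one_of_lt (Fin.lt_def.mpr (by simpa using hi))
  simp only [slidingWindow, hval]
  ring_nf

lemma slidingWindow_succ_last :
    slidingWindow x m (k + 1) (Fin.last m) = x (k + (m + 1)) := by
  simp only [slidingWindow, Fin.val_last]
  ring_nf

lemma slidingWindow_succ_eq_and_eq_iff {w w' : Fin (m + 1) → S}
    (hshift : ∀ i : Fin (m + 1), (i : ℕ) < m → w' i = w (i + 1)) :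
    slidingWindow x m (k + 1) = w' ∧ slidingWindow x m k = w ↔
      slidingWindow x m k = w ∧ x (k + (m + 1)) = w' (Fin.last m) := by
  constructor
  · rintro ⟨rfl, rfl⟩
    exact ⟨rfl, (slidingWindow_succ_last x).symm⟩
  · rintro ⟨rfl, hlast⟩
    refine ⟨funext fun i => ?_, rfl⟩
    by_cases hi : (i : ℕ) < m
    · rw [hshift i hi, slidingWindow_apply_add_one x hi]
    · obtain rfl : i = Fin.last m := Fin.ext (by simp only [Fin.val_last]; omega)
      rw [slidingWindow_succ_last, hlast]

lemma not_slidingWindow_succ_eq_and_eq {w w' : Fin (m + 1) → S}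
    (hshift : ¬ ∀ i : Fin (m + 1), (i : ℕ) < m → w' i = w (i + 1)) :
    ¬ (slidingWindow x m (k + 1) = w' ∧ slidingWindow x m k = w) := by
  rintro ⟨rfl, rfl⟩
  exact hshift fun i hi => (slidingWindow_apply_add_one x hi).symm

end Shift

lemma ProbabilityTheory.iIndepFun.indepFun_slidingWindow {Ω β : Type*} [MeasurableSpace Ω]
    [MeasurableSpace β] {P : Measure Ω} {γ : ℕ → Ω → β} (hindep : iIndepFun γ P)
    (hmeas : ∀ n, Measurable (γ n)) (m k : ℕ) :
    IndepFun (fun ω => slidingWindow (γ · ω) m k) (γ (k + (m + 1))) P := by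
  let I := (Finset.range (m + 1)).map (addLeftEmbedding k)
  have hI : ∀ i : Fin (m + 1), k + (i : ℕ) ∈ I := fun i => by simpa [I] using i.is_le
  have hdisj : Disjoint I {k + (m + 1)} := by simp [I]
  have hφ : Measurable fun (v : I → β) (i : Fin (m + 1)) => v ⟨k + i, hI i⟩ := by fun_prop
  have hψ : Measurable fun (v : ({k + (m + 1)} : Finset ℕ) → β) =>
      v ⟨k + (m + 1), Finset.mem_singleton_self _⟩ := by fun_prop
  exact (hindep.indepFun_finset _ _ hdisj hmeas).comp hφ hψ

theorem stmt_5_general {Ω : Type*} [MeasurableSpace Ω] (P : Measure Ω) [IsProbabilityMeasure P]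
    (S : Type*) [MeasurableSpace S] [MeasurableSingletonClass S]
    (m : ℕ) (γ : ℕ → Ω → S)
    (hmeas : ∀ k, Measurable (γ k))
    (hindep : iIndepFun γ P)
    (hident : ∀ k, IdentDistrib (γ k) (γ 0) P P)
    (μ : Measure S) (hμ : μ = Measure.map (γ 0) P)
    (W : ℕ → Ω → (Fin (m + 1) → S))
    (hW : ∀ k ω, W k ω = fun i : Fin (m + 1) => γ (k + i.val) ω)
    (k : ℕ) (w w' : Fin (m + 1) → S)
    (hpos : 0 < P {ω | W k ω = w}) :
    ((∀ i : Fin (m + 1), (i : ℕ) < m → w' i = w (i + 1)) →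
      P ({ω | W (k + 1) ω = w'} ∩ {ω | W k ω = w}) / P {ω | W k ω = w}
        = μ {w' (Fin.last m)}) ∧
    (¬ (∀ i : Fin (m + 1), (i : ℕ) < m → w' i = w (i + 1)) →
      P ({ω | W (k + 1) ω = w'} ∩ {ω | W k ω = w}) = 0) := by
  have hWk : ∀ k, W k = fun ω => slidingWindow (γ · ω) m k := fun k => funext (hW k)
  simp only [hWk] at hpos ⊢
  constructor
  · intro hshift
    have hinter : {ω | slidingWindow (γ · ω) m (k + 1) = w'} ∩ {ω | slidingWindow (γ · ω) m k = w}
        = (fun ω => slidingWindow (γ · ω) m k) ⁻¹' {w} ∩ γ (k + (m + 1)) ⁻¹' {w' (Fin.last m)} :=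
      Set.ext fun ω => slidingWindow_succ_eq_and_eq_iff _ hshift
    have hlaw : P (γ (k + (m + 1)) ⁻¹' {w' (Fin.last m)}) = μ {w' (Fin.last m)} := by
      rw [hμ, ← (hident _).map_eq, Measure.map_apply (hmeas _) (measurableSet_singleton _)]
    rw [hinter, (hindep.indepFun_slidingWindow hmeas m k).measure_inter_preimage_eq_mul _ _
      (measurableSet_singleton _) (measurableSet_singleton _), hlaw]
    rw [mul_comm]
    exact ENNReal.mul_div_cancel_right hpos.ne' (measure_ne_top _ _)
  · intro hshift
    have hempty : {ω | slidingWindow (γ · ω) m (k + 1) = w'}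
        ∩ {ω | slidingWindow (γ · ω) m k = w} = ∅ :=
      Set.eq_empty_of_forall_notMem fun ω => not_slidingWindow_succ_eq_and_eq _ hshift
    rw [hempty, measure_empty]

/-- Homogeneous transition kernel of the sliding-window chain built from an i.i.d.
sequence: if `w'` is the unit shift of `w` extended by a new symbol, the transition
probability equals the law of the new symbol; otherwise the transition is impossible.
In particular, the transition probabilities do not depend on `k`. -/
theorem stmt_5 {Ω : Type*} [MeasurableSpace Ω] (P : Measure Ω) [IsProbabilityMeasure P]
    (S : Type*) [Fintype S] [Nonempty S] [MeasurableSpace S] [MeasurableSingletonClass S]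
    (m : ℕ) (γ : ℕ → Ω → S)
    (hmeas : ∀ k, Measurable (γ k))
    (hindep : iIndepFun γ P)
    (hident : ∀ k, IdentDistrib (γ k) (γ 0) P P)
    (μ : Measure S) (hμ : μ = Measure.map (γ 0) P)
    (W : ℕ → Ω → (Fin (m + 1) → S))
    (hW : ∀ k ω, W k ω = fun i : Fin (m + 1) => γ (k + i.val) ω)
    (k : ℕ) (w w' : Fin (m + 1) → S)
    (hpos : 0 < P {ω | W k ω = w}) :
    ((∀ i : Fin (m + 1), (i : ℕ) < m → w' i = w (i + 1)) →
      P ({ω | W (k + 1) ω = w'} ∩ {ω | W k ω = w}) / P {ω | W k ω = w}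
        = μ {w' (Fin.last m)}) ∧
    (¬ (∀ i : Fin (m + 1), (i : ℕ) < m → w' i = w (i + 1)) →
      P ({ω | W (k + 1) ω = w'} ∩ {ω | W k ω = w}) = 0) :=
  stmt_5_general P S m γ hmeas hindep hident μ hμ W hW k w w' hpos
end

section
/- (Theorem 1, modal covariance recursion.) Let (Ω, 𝓕, ℙ) be a probability space, r ∈ ℕ, and J = Fin (r+1). Let p : J → J → ℝ be row-stochastic (p i j ≥ 0, ∑_j p i j = 1) with stationary distribution π (π j > 0, ∑_j π j = 1, ∑_i π i · p i j = π j). Let θ₀, θ₁ : Ω → J be measurable with ℙ({θ₀ = i} ∩ {θ₁ = j}) = π i · p i j for all i, j. Let e : Ω → ℝⁿ, w : Ω → ℝ^{n_w}, v : Ω → ℝ^{m} be square-integrable random vectors such that the pair (w, v) is independent of (e, θ₀, θ₁), w and v are independent, 𝔼[w] = 0, 𝔼[v] = 0, 𝔼[w wᵀ] = W, 𝔼[v vᵀ] = V. For each i ∈ J let P_i = 𝔼[e eᵀ | θ₀ = i] denote the conditional second-moment matrix, and assume 𝔼[e eᵀ | θ₀ = i, θ₁ = j] = P_i for all i, j (the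 previous error's conditional second moment does not depend on the next chain state). Given real matrices Ā (n×n), B̄ (n×n_w), and for each j ∈ J matrices F_j (n×n) and X_j (n×m), define the new error e' : Ω → ℝⁿ by e'(ω) = F_{θ₁(ω)} (Ā e(ω) + B̄ w(ω)) − X_{θ₁(ω)} v(ω). Then for every j ∈ J: 𝔼[e' e'ᵀ | θ₁ = j] = ∑_{i ∈ J} p i j · (π i / π j) · ( F_j (Ā P_i Āᵀ + B̄ W B̄ᵀ) F_jᵀ + X_j V X_jᵀ ). -/
/-!
On the event `{θ₁ = j}` the new error is the linear image `(F_j Ā) e + [F_j B̄, -X_j] η` of the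
previous error `e` and the stacked noise `η = (w, v)`. Since `η` is centred and independent of
`(e, θ₀, θ₁)`, the vectors `e` and `η` are uncorrelated on that event and the second moment of `η`
there is `ℙ(θ₁ = j) • diag(W, V)`; hence `𝔼[e' e'ᵀ 1_{θ₁ = j}]` splits as
`F_j Ā 𝔼[e eᵀ 1_{θ₁ = j}] (F_j Ā)ᵀ + ℙ(θ₁ = j) (F_j B̄ W B̄ᵀ F_jᵀ + X_j V X_jᵀ)`.
Splitting `{θ₁ = j}` along `θ₀`, the cell `{θ₀ = i, θ₁ = j}` has probability `π_i p_ij` and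
contributes `π_i p_ij P_i` to `𝔼[e eᵀ 1_{θ₁ = j}]`. Finally divide by
`ℙ(θ₁ = j) = ∑_i π_i p_ij = π_j`.
-/

open MeasureTheory ProbabilityTheory Matrix

/-- The conditional second-moment matrix `𝔼[x xᵀ | E] = 𝔼[x xᵀ 1_E] / P(E)`. -/
noncomputable def condSecondMoment {Ω : Type*} [MeasurableSpace Ω] (P : Measure Ω)
    (E : Set Ω) {n : ℕ} (x : Ω → Fin n → ℝ) : Matrix (Fin n) (Fin n) ℝ :=
  Matrix.of fun a b => (∫ ω in E, x ω a * x ω b ∂P) / (P E).toReal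

namespace Matrix

variable {R m n₁ n₂ : Type*} [Semiring R] [Fintype n₁] [Fintype n₂]

theorem fromCols_mul_fromBlocks_zero_mul_transpose (A : Matrix m n₁ R) (B : Matrix m n₂ R)
    (D : Matrix n₁ n₁ R) (E : Matrix n₂ n₂ R) :
    fromCols A B * fromBlocks D 0 0 E * (fromCols A B)ᵀ = A * D * Aᵀ + B * E * Bᵀ := by
  simp [fromCols_mul_fromBlocks, transpose_fromCols, fromCols_mul_fromRows]

end Matrix

theorem inv_smul_sum_smul_add_smul {ι K M : Type*} [Fintype ι] [Field K] [AddCommGroup M]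
    [Module K M] {c : ι → K} {s : K} (hc : ∑ i, c i = s) (Q : ι → M) (R : M) :
    s⁻¹ • (∑ i, c i • Q i + s • R) = ∑ i, (s⁻¹ * c i) • (Q i + R) := by
  simp only [← hc, smul_add, Finset.sum_add_distrib, Finset.smul_sum, Finset.sum_smul, smul_smul]

section CrossMoment

variable {Ω : Type*} [MeasurableSpace Ω] {μ : Measure Ω} {ι κ ι' κ' : Type*}

noncomputable def crossMoment (μ : Measure Ω) (x : Ω → ι → ℝ) (y : Ω → κ → ℝ) : Matrix ι κ ℝ :=
  Matrix.of fun a b => ∫ ω, x ω a * y ω b ∂μ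

theorem crossMoment_comm (x : Ω → ι → ℝ) (y : Ω → κ → ℝ) :
    crossMoment μ y x = (crossMoment μ x y)ᵀ := by
  ext a b
  simp only [crossMoment, of_apply, transpose_apply, mul_comm]

theorem crossMoment_congr_ae {x x' : Ω → ι → ℝ} {y y' : Ω → κ → ℝ} (hx : x =ᵐ[μ] x')
    (hy : y =ᵐ[μ] y') : crossMoment μ x y = crossMoment μ x' y' := by
  ext a b
  refine integral_congr_ae ?_
  filter_upwards [hx, hy] with ω hxω hyω
  rw [hxω, hyω]

theorem crossMoment_sumElim_of_eq_zero {x : Ω → ι → ℝ} {y : Ω → κ → ℝ}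
    (h : crossMoment μ x y = 0) :
    crossMoment μ (fun ω => Sum.elim (x ω) (y ω)) (fun ω => Sum.elim (x ω) (y ω)) =
      fromBlocks (crossMoment μ x x) 0 0 (crossMoment μ y y) := by
  rw [← h, ← transpose_zero, ← h, ← crossMoment_comm]
  ext (a | a) (b | b) <;> rfl

theorem crossMoment_mulVec [Fintype ι] [Fintype κ] {x : Ω → ι → ℝ} {y : Ω → κ → ℝ}
    (hx : ∀ a, MemLp (fun ω => x ω a) 2 μ) (hy : ∀ b, MemLp (fun ω => y ω b) 2 μ)
    (A : Matrix ι' ι ℝ) (B : Matrix κ' κ ℝ) :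
    crossMoment μ (fun ω => A *ᵥ x ω) (fun ω => B *ᵥ y ω) = A * crossMoment μ x y * Bᵀ := by
  have hint : ∀ c d, Integrable (fun ω => x ω c * y ω d) μ := fun c d =>
    (hx c).integrable_mul (hy d)
  ext a b
  calc ∫ ω, (A *ᵥ x ω) a * (B *ᵥ y ω) b ∂μ
      = ∫ ω, ∑ c, ∑ d, A a c * B b d * (x ω c * y ω d) ∂μ := by
        congr with ω
        simp only [mulVec, dotProduct, Finset.sum_mul_sum]
        exact Finset.sum_congr rfl fun c _ => Finset.sum_congr rfl fun d _ => by ring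
    _ = ∑ c, ∑ d, A a c * B b d * ∫ ω, x ω c * y ω d ∂μ := by
        rw [integral_finsetSum _ fun c _ => integrable_finsetSum _ fun d _ =>
          (hint c d).const_mul _]
        refine Finset.sum_congr rfl fun c _ => ?_
        rw [integral_finsetSum _ fun d _ => (hint c d).const_mul _]
        simp only [integral_const_mul]
    _ = (A * crossMoment μ x y * Bᵀ) a b := by
        simp only [crossMoment, mul_apply, of_apply, transpose_apply, Finset.sum_mul]
        rw [Finset.sum_comm]
        exact Finset.sum_congr rfl fun c _ => Finset.sum_congr rfl fun d _ => by ring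

theorem memLp_sumElim {p : ENNReal} {x : Ω → ι → ℝ} {y : Ω → κ → ℝ}
    (hx : ∀ a, MemLp (fun ω => x ω a) p μ) (hy : ∀ b, MemLp (fun ω => y ω b) p μ) :
    ∀ k, MemLp (fun ω => Sum.elim (x ω) (y ω) k) p μ := by
  rintro (a | b)
  exacts [hx a, hy b]

theorem crossMoment_add_mulVec_of_eq_zero [Fintype ι] [Fintype κ] {n : Type*}
    {x : Ω → ι → ℝ} {y : Ω → κ → ℝ}
    (hx : ∀ a, MemLp (fun ω => x ω a) 2 μ) (hy : ∀ b, MemLp (fun ω => y ω b) 2 μ)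
    (hxy : crossMoment μ x y = 0) (A : Matrix n ι ℝ) (B : Matrix n κ ℝ) :
    crossMoment μ (fun ω => A *ᵥ x ω + B *ᵥ y ω) (fun ω => A *ᵥ x ω + B *ᵥ y ω) =
      A * crossMoment μ x x * Aᵀ + B * crossMoment μ y y * Bᵀ := by
  have hz := memLp_sumElim hx hy
  simp only [← fromCols_mulVec_sumElim]
  rw [crossMoment_mulVec hz hz, crossMoment_sumElim_of_eq_zero hxy,
    fromCols_mul_fromBlocks_zero_mul_transpose]

end CrossMoment

section Independence

variable {Ω β γ : Type*} [MeasurableSpace Ω] [MeasurableSpace β] [mγ : MeasurableSpace γ]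
  {μ : Measure Ω} {U : Ω → β} {V : Ω → γ} {E : Set Ω}

theorem ProbabilityTheory.IndepFun.setIntegral_mul_comp (hUV : IndepFun U V μ)
    (hEV : MeasurableSet[mγ.comap V] E) (hE : MeasurableSet E) {φ : β → ℝ} {ψ : γ → ℝ}
    (hφ : Measurable φ) (hψ : Measurable ψ)
    (hφU : AEStronglyMeasurable (fun ω => φ (U ω)) μ)
    (hψV : AEStronglyMeasurable (fun ω => ψ (V ω)) μ) :
    ∫ ω in E, ψ (V ω) * φ (U ω) ∂μ = (∫ ω in E, ψ (V ω) ∂μ) * ∫ ω, φ (U ω) ∂μ := by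
  obtain ⟨s, hs, rfl⟩ := hEV
  have hind : IndepFun (fun ω => s.indicator ψ (V ω)) (fun ω => φ (U ω)) μ :=
    (hUV.comp hφ (hψ.indicator hs)).symm
  rw [← integral_indicator hE, ← integral_indicator hE]
  simp only [Set.indicator_mul_left]
  exact hind.integral_fun_mul_eq_mul_integral (hψV.indicator hE) hφU

variable {ι κ : Type*} {x : Ω → ι → ℝ} {y : Ω → κ → ℝ}

theorem ProbabilityTheory.IndepFun.sumElim
    (h : IndepFun (fun ω => (x ω, y ω)) V μ) :
    IndepFun (fun ω => Sum.elim (x ω) (y ω)) V μ :=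
  h.comp (φ := fun q : (ι → ℝ) × (κ → ℝ) => Sum.elim q.1 q.2)
    (measurable_pi_iff.2 fun k => by
      cases k <;> simp only [Sum.elim_inl, Sum.elim_inr] <;> fun_prop)
    measurable_id

theorem ProbabilityTheory.IndepFun.crossMoment_eq_zero
    (hxy : IndepFun x y μ) (hx : ∀ a, AEStronglyMeasurable (fun ω => x ω a) μ)
    (hy : ∀ b, AEStronglyMeasurable (fun ω => y ω b) μ) (hmean : ∀ a, ∫ ω, x ω a ∂μ = 0) :
    crossMoment μ x y = 0 := by
  ext a b
  have h := IndepFun.integral_fun_mul_eq_mul_integral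
    (hxy.comp (measurable_pi_apply a) (measurable_pi_apply b)) (hx a) (hy b)
  simpa [crossMoment, hmean] using h

theorem ProbabilityTheory.IndepFun.crossMoment_restrict
    (hxV : IndepFun x V μ) (hEV : MeasurableSet[mγ.comap V] E) (hE : MeasurableSet E)
    (hx : ∀ a, MemLp (fun ω => x ω a) 2 μ) :
    crossMoment (μ.restrict E) x x = μ.real E • crossMoment μ x x := by
  ext a b
  have h := hxV.setIntegral_mul_comp hEV hE (φ := fun q => q a * q b) (ψ := fun _ => 1)
    (by fun_prop) measurable_const
    ((hx a).aestronglyMeasurable.mul (hx b).aestronglyMeasurable) aestronglyMeasurable_const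
  simpa [crossMoment] using h

theorem ProbabilityTheory.IndepFun.crossMoment_restrict_eq_zero
    (hind : IndepFun y (fun ω => (x ω, V ω)) μ) (hEV : MeasurableSet[mγ.comap V] E)
    (hE : MeasurableSet E) (hx : ∀ a, AEStronglyMeasurable (fun ω => x ω a) μ)
    (hy : ∀ b, AEStronglyMeasurable (fun ω => y ω b) μ) (hmean : ∀ b, ∫ ω, y ω b ∂μ = 0) :
    crossMoment (μ.restrict E) x y = 0 := by
  obtain ⟨s, hs, rfl⟩ := hEV
  ext a b
  have h := hind.setIntegral_mul_comp ⟨Prod.snd ⁻¹' s, measurable_snd hs, rfl⟩ hE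
    (φ := fun q => q b) (ψ := fun t => t.1 a) (measurable_pi_apply b)
    ((measurable_pi_apply a).comp measurable_fst) (hy b) (hx a)
  rw [hmean, mul_zero] at h
  exact h

theorem ProbabilityTheory.IndepFun.crossMoment_restrict_add_mulVec [Fintype ι] [Fintype κ]
    {n : Type*}
    (hind : IndepFun y (fun ω => (x ω, V ω)) μ) (hEV : MeasurableSet[mγ.comap V] E)
    (hE : MeasurableSet E) (hx : ∀ a, MemLp (fun ω => x ω a) 2 μ)
    (hy : ∀ b, MemLp (fun ω => y ω b) 2 μ) (hmean : ∀ b, ∫ ω, y ω b ∂μ = 0)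
    (A : Matrix n ι ℝ) (B : Matrix n κ ℝ) :
    crossMoment (μ.restrict E) (fun ω => A *ᵥ x ω + B *ᵥ y ω) (fun ω => A *ᵥ x ω + B *ᵥ y ω) =
      A * crossMoment (μ.restrict E) x x * Aᵀ + μ.real E • (B * crossMoment μ y y * Bᵀ) := by
  have hyV : IndepFun y V μ := hind.comp measurable_id measurable_snd
  rw [crossMoment_add_mulVec_of_eq_zero (fun a => (hx a).restrict E)
    (fun b => (hy b).restrict E)
    (hind.crossMoment_restrict_eq_zero hEV hE (fun a => (hx a).aestronglyMeasurable)
      (fun b => (hy b).aestronglyMeasurable) hmean),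
    hyV.crossMoment_restrict hEV hE hy, Matrix.mul_smul, Matrix.smul_mul]

end Independence

section Partition

variable {Ω ι : Type*} [MeasurableSpace Ω] [MeasurableSpace ι] [MeasurableSingletonClass ι]
  [Fintype ι] {μ : Measure Ω} {θ : Ω → ι} {E : Set Ω}

theorem setIntegral_eq_sum_inter_fiber {G : Type*} [NormedAddCommGroup G] [NormedSpace ℝ G]
    (hθ : Measurable θ) (hE : MeasurableSet E) {f : Ω → G} (hf : IntegrableOn f E μ) :
    ∫ ω in E, f ω ∂μ = ∑ i, ∫ ω in {ω | θ ω = i} ∩ E, f ω ∂μ := by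
  have hcover : ⋃ i, {ω | θ ω = i} ∩ E = E := by
    ext ω
    simp
  rw [← integral_iUnion_fintype, hcover]
  · exact fun i => (hθ (measurableSet_singleton i)).inter hE
  · intro i i' hii'
    exact Set.disjoint_left.2 fun ω hω hω' => hii' (hω.1.symm.trans hω'.1)
  · exact fun i => hf.mono_set Set.inter_subset_right

theorem measureReal_eq_sum_inter_fiber [IsFiniteMeasure μ] (hθ : Measurable θ)
    (hE : MeasurableSet E) : μ.real E = ∑ i, μ.real ({ω | θ ω = i} ∩ E) := by
  simpa using setIntegral_eq_sum_inter_fiber hθ hE (integrableOn_const (C := (1 : ℝ)))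

theorem crossMoment_restrict_self_eq_smul_condSecondMoment [IsFiniteMeasure μ] {n : ℕ}
    (x : Ω → Fin n → ℝ) (E : Set Ω) :
    crossMoment (μ.restrict E) x x = μ.real E • condSecondMoment μ E x := by
  ext a b
  by_cases hE : μ.real E = 0
  · rw [Measure.restrict_eq_zero.2 ((measureReal_eq_zero_iff).1 hE), hE, zero_smul]
    simp [crossMoment]
  · simp only [crossMoment, condSecondMoment, of_apply, Matrix.smul_apply, smul_eq_mul,
      ← measureReal_def]
    field_simp

theorem crossMoment_restrict_eq_sum_smul [IsFiniteMeasure μ] {n : ℕ} (hθ : Measurable θ)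
    (hE : MeasurableSet E) {x : Ω → Fin n → ℝ} (hx : ∀ a, MemLp (fun ω => x ω a) 2 μ)
    {M : ι → Matrix (Fin n) (Fin n) ℝ}
    (hM : ∀ i, 0 < μ ({ω | θ ω = i} ∩ E) → condSecondMoment μ ({ω | θ ω = i} ∩ E) x = M i) :
    crossMoment (μ.restrict E) x x = ∑ i, μ.real ({ω | θ ω = i} ∩ E) • M i := by
  have hcell : ∀ i, crossMoment (μ.restrict ({ω | θ ω = i} ∩ E)) x x =
      μ.real ({ω | θ ω = i} ∩ E) • M i := by
    intro i
    rw [crossMoment_restrict_self_eq_smul_condSecondMoment]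
    -- a null cell contributes nothing, whatever junk value `condSecondMoment` takes on it
    rcases eq_zero_or_pos (μ ({ω | θ ω = i} ∩ E)) with hnull | hpos
    · rw [measureReal_def, hnull, ENNReal.toReal_zero, zero_smul, zero_smul]
    · rw [hM i hpos]
  ext a b
  simp only [Matrix.sum_apply, ← hcell]
  exact setIntegral_eq_sum_inter_fiber hθ hE ((hx a).integrable_mul (hx b)).integrableOn

end Partition

theorem stmt_8_general {Ω : Type*} [MeasurableSpace Ω] (P : Measure Ω) [IsProbabilityMeasure P]
    (r n nw m : ℕ)
    (p : Fin (r + 1) → Fin (r + 1) → ℝ) (π : Fin (r + 1) → ℝ)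
    (hπpos : ∀ j, 0 < π j)
    (hstat : ∀ j, ∑ i, π i * p i j = π j)
    (θ₀ θ₁ : Ω → Fin (r + 1)) (hθ₀ : Measurable θ₀) (hθ₁ : Measurable θ₁)
    (hjoint : ∀ i j, (P ({ω | θ₀ ω = i} ∩ {ω | θ₁ ω = j})).toReal = π i * p i j)
    (e : Ω → Fin n → ℝ) (w : Ω → Fin nw → ℝ) (v : Ω → Fin m → ℝ)
    (he2 : ∀ i, MemLp (fun ω => e ω i) 2 P)
    (hw2 : ∀ i, MemLp (fun ω => w ω i) 2 P)
    (hv2 : ∀ i, MemLp (fun ω => v ω i) 2 P)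
    (hindep : IndepFun (fun ω => (w ω, v ω)) (fun ω => (e ω, θ₀ ω, θ₁ ω)) P)
    (hwv : IndepFun w v P)
    (hwmean : ∀ i, ∫ ω, w ω i ∂P = 0)
    (hvmean : ∀ i, ∫ ω, v ω i ∂P = 0)
    (Wm : Matrix (Fin nw) (Fin nw) ℝ)
    (hWm : Wm = Matrix.of fun a b => ∫ ω, w ω a * w ω b ∂P)
    (Vm : Matrix (Fin m) (Fin m) ℝ)
    (hVm : Vm = Matrix.of fun a b => ∫ ω, v ω a * v ω b ∂P)
    (Pmat : Fin (r + 1) → Matrix (Fin n) (Fin n) ℝ)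
    (hPmat' : ∀ i j, 0 < P ({ω | θ₀ ω = i} ∩ {ω | θ₁ ω = j}) →
      condSecondMoment P ({ω | θ₀ ω = i} ∩ {ω | θ₁ ω = j}) e = Pmat i)
    (Abar : Matrix (Fin n) (Fin n) ℝ) (Bbar : Matrix (Fin n) (Fin nw) ℝ)
    (F : Fin (r + 1) → Matrix (Fin n) (Fin n) ℝ)
    (X : Fin (r + 1) → Matrix (Fin n) (Fin m) ℝ)
    (e' : Ω → Fin n → ℝ)
    (he' : ∀ ω, e' ω =
      (F (θ₁ ω)).mulVec (Abar.mulVec (e ω) + Bbar.mulVec (w ω))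
        - (X (θ₁ ω)).mulVec (v ω))
    (j : Fin (r + 1)) :
    condSecondMoment P {ω | θ₁ ω = j} e' =
      ∑ i, (p i j * (π i / π j)) •
        (F j * (Abar * Pmat i * Abarᵀ + Bbar * Wm * Bbarᵀ) * (F j)ᵀ
          + X j * Vm * (X j)ᵀ) := by
  have hS : MeasurableSet {ω | θ₁ ω = j} := hθ₁ (measurableSet_singleton j)
  have hSθ : MeasurableSet[MeasurableSpace.comap (fun ω => (θ₀ ω, θ₁ ω)) inferInstance]
      {ω | θ₁ ω = j} :=
    ⟨{t | t.2 = j}, measurable_snd (measurableSet_singleton j), rfl⟩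
  set η : Ω → Fin nw ⊕ Fin m → ℝ := fun ω => Sum.elim (w ω) (v ω)
  have hηmean : ∀ k, ∫ ω, η ω k ∂P = 0 := by
    rintro (a | b)
    exacts [hwmean a, hvmean b]
  have hPS : P.real {ω | θ₁ ω = j} = π j := by
    rw [measureReal_eq_sum_inter_fiber hθ₀ hS]
    simp only [measureReal_def, hjoint, hstat]
  have he'S : e' =ᵐ[P.restrict {ω | θ₁ ω = j}] fun ω =>
      (F j * Abar) *ᵥ e ω + fromCols (F j * Bbar) (-X j) *ᵥ η ω := by
    filter_upwards [ae_restrict_mem hS] with ω hω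
    rw [he' ω, hω, fromCols_mulVec_sumElim, mulVec_add, mulVec_mulVec, mulVec_mulVec,
      neg_mulVec]
    abel
  have hmode : crossMoment (P.restrict {ω | θ₁ ω = j}) e e = ∑ i, (π i * p i j) • Pmat i := by
    rw [crossMoment_restrict_eq_sum_smul hθ₀ hS he2 fun i => hPmat' i j]
    simp only [measureReal_def, hjoint]
  have hnoise : crossMoment P η η = fromBlocks Wm 0 0 Vm := by
    rw [crossMoment_sumElim_of_eq_zero (hwv.crossMoment_eq_zero
      (fun a => (hw2 a).aestronglyMeasurable) (fun b => (hv2 b).aestronglyMeasurable) hwmean),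
      hWm, hVm]
    rfl
  have hsplit : ∀ i, F j * (Abar * Pmat i * Abarᵀ + Bbar * Wm * Bbarᵀ) * (F j)ᵀ
      + X j * Vm * (X j)ᵀ = F j * Abar * Pmat i * (F j * Abar)ᵀ
        + (F j * Bbar * Wm * (F j * Bbar)ᵀ + X j * Vm * (X j)ᵀ) := fun i => by
    simp only [Matrix.mul_add, Matrix.add_mul, transpose_mul, Matrix.mul_assoc, add_assoc]
  rw [← inv_smul_smul₀ (hπpos j).ne' (condSecondMoment P _ e'), ← hPS,
    ← crossMoment_restrict_self_eq_smul_condSecondMoment, crossMoment_congr_ae he'S he'S,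
    hindep.sumElim.crossMoment_restrict_add_mulVec hSθ hS he2 (memLp_sumElim hw2 hv2) hηmean,
    hmode, hnoise, hPS]
  simp only [Finset.mul_sum, Finset.sum_mul, Matrix.mul_smul, Matrix.smul_mul,
    fromCols_mul_fromBlocks_zero_mul_transpose, transpose_neg, Matrix.neg_mul, Matrix.mul_neg,
    neg_neg, inv_smul_sum_smul_add_smul (hstat j), hsplit]
  exact Finset.sum_congr rfl fun i _ => by congr 1; ring

/-- Theorem 1 of the paper (modal covariance recursion): for the jump-filter error
`e' = F_{θ₁} (Ā e + B̄ w) − X_{θ₁} v` driven by a stationary Markov chain `(θ₀, θ₁)` with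
transition matrix `p` and stationary distribution `π`, the modal second moments satisfy
`𝔼[e' e'ᵀ | θ₁ = j] = ∑ i, p i j (π i / π j) (F_j (Ā P_i Āᵀ + B̄ W B̄ᵀ) F_jᵀ + X_j V X_jᵀ)`. -/
theorem stmt_8 {Ω : Type*} [MeasurableSpace Ω] (P : Measure Ω) [IsProbabilityMeasure P]
    (r n nw m : ℕ)
    (p : Fin (r + 1) → Fin (r + 1) → ℝ) (π : Fin (r + 1) → ℝ)
    (hp0 : ∀ i j, 0 ≤ p i j) (hp1 : ∀ i, ∑ j, p i j = 1)
    (hπpos : ∀ j, 0 < π j) (hπ1 : ∑ j, π j = 1)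
    (hstat : ∀ j, ∑ i, π i * p i j = π j)
    (θ₀ θ₁ : Ω → Fin (r + 1)) (hθ₀ : Measurable θ₀) (hθ₁ : Measurable θ₁)
    (hjoint : ∀ i j, (P ({ω | θ₀ ω = i} ∩ {ω | θ₁ ω = j})).toReal = π i * p i j)
    (e : Ω → Fin n → ℝ) (w : Ω → Fin nw → ℝ) (v : Ω → Fin m → ℝ)
    (he2 : ∀ i, MemLp (fun ω => e ω i) 2 P)
    (hw2 : ∀ i, MemLp (fun ω => w ω i) 2 P)
    (hv2 : ∀ i, MemLp (fun ω => v ω i) 2 P)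
    (hindep : IndepFun (fun ω => (w ω, v ω)) (fun ω => (e ω, θ₀ ω, θ₁ ω)) P)
    (hwv : IndepFun w v P)
    (hwmean : ∀ i, ∫ ω, w ω i ∂P = 0)
    (hvmean : ∀ i, ∫ ω, v ω i ∂P = 0)
    (Wm : Matrix (Fin nw) (Fin nw) ℝ)
    (hWm : Wm = Matrix.of fun a b => ∫ ω, w ω a * w ω b ∂P)
    (Vm : Matrix (Fin m) (Fin m) ℝ)
    (hVm : Vm = Matrix.of fun a b => ∫ ω, v ω a * v ω b ∂P)
    (Pmat : Fin (r + 1) → Matrix (Fin n) (Fin n) ℝ)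
    (hPmat : ∀ i, Pmat i = condSecondMoment P {ω | θ₀ ω = i} e)
    (hPmat' : ∀ i j, 0 < P ({ω | θ₀ ω = i} ∩ {ω | θ₁ ω = j}) →
      condSecondMoment P ({ω | θ₀ ω = i} ∩ {ω | θ₁ ω = j}) e = Pmat i)
    (Abar : Matrix (Fin n) (Fin n) ℝ) (Bbar : Matrix (Fin n) (Fin nw) ℝ)
    (F : Fin (r + 1) → Matrix (Fin n) (Fin n) ℝ)
    (X : Fin (r + 1) → Matrix (Fin n) (Fin m) ℝ)
    (e' : Ω → Fin n → ℝ)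
    (he' : ∀ ω, e' ω =
      (F (θ₁ ω)).mulVec (Abar.mulVec (e ω) + Bbar.mulVec (w ω))
        - (X (θ₁ ω)).mulVec (v ω))
    (j : Fin (r + 1)) :
    condSecondMoment P {ω | θ₁ ω = j} e' =
      ∑ i, (p i j * (π i / π j)) •
        (F j * (Abar * Pmat i * Abarᵀ + Bbar * Wm * Bbarᵀ) * (F j)ᵀ
          + X j * Vm * (X j)ᵀ) :=
  stmt_8_general P r n nw m p π hπpos hstat θ₀ θ₁ hθ₀ hθ₁ hjoint e w v he2 hw2 hv2 hindep hwv hwmean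
    hvmean Wm hWm Vm hVm Pmat hPmat' Abar Bbar F X e' he' j
end

section
/- (Theorem 2, condition (16a).) Let r ∈ ℕ and J = Fin (r+1); let p : J → J → ℝ be row-stochastic (p i j ≥ 0, ∑_j p i j = 1) with stationary distribution π (π j > 0, ∑_j π j = 1, ∑_i π i · p i j = π j). Let Ā be an n×n real matrix, B̄ an n×n_w real matrix, W an n_w×n_w real positive semidefinite matrix, V an m×m real positive semidefinite matrix, C̄ an m×n real matrix, and for each j ∈ J let ψ_j be an m×m real matrix and L_j an n×m real matrix; set F_j = I − L_j ψ_j C̄ and X_j = L_j ψ_j, and define the coupled operator 𝔈_j(P₀, …, P_r) = ∑_{i ∈ J} p i j · (π i / π j) · ( F_j (Ā P_i Āᵀ + B̄ W B̄ᵀ) F_jᵀ + X_j V X_jᵀ ). Suppose there exist real symmetric positive definite matrices P₀, …, P_r such that 𝔈_j(P₀, …, P_r) ⪯ P_j for every j ∈ J. Then for every j ∈ J with ψ_j = 0, every eigenvalue λ ∈ ℂ of Ā (of its entrywise complexification) satisfies p j j · |λ|² ≤ 1. -/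
/-!
When `ψ_j = 0` the gain drops out of mode `j` (`F_j = 1`, `X_j = 0`), and discarding the
nonnegative terms of the coupled inequality leaves the Lyapunov-type inequality
`p_jj • Ā P_j Āᵀ ⪯ P_j`. Evaluating its quadratic form at an eigenvector `w` of `Āᴴ` for the
eigenvalue `conj λ` gives `p_jj |λ|² w⋆P_j w ≤ w⋆P_j w`, and `w⋆P_j w > 0`.
-/

open Matrix
open scoped MatrixOrder ComplexOrder

namespace Matrix

variable {n 𝕜 : Type*} [Fintype n] [RCLike 𝕜]

lemma PosSemidef.map_algebraMap {M : Matrix n n ℝ} (hM : M.PosSemidef) :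
    (M.map (algebraMap ℝ 𝕜)).PosSemidef := by
  classical
  obtain ⟨B, rfl⟩ := CStarAlgebra.nonneg_iff_eq_star_mul_self.mp hM.nonneg
  rw [star_eq_conjTranspose, Matrix.map_mul, conjTranspose_map _ fun _ ↦ by simp]
  exact posSemidef_conjTranspose_mul_self _

lemma PosDef.map_algebraMap [DecidableEq n] {M : Matrix n n ℝ} (hM : M.PosDef) :
    (M.map (algebraMap ℝ 𝕜)).PosDef := by
  rw [hM.posSemidef.map_algebraMap.posDef_iff_det_ne_zero, ← RingHom.mapMatrix_apply,
    ← RingHom.map_det]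
  simpa using hM.det_pos.ne'

lemma exists_mulVec_eq_smul_of_mem_spectrum {K : Type*} [Field K] [DecidableEq n]
    {A : Matrix n n K} {μ : K} (hμ : μ ∈ spectrum K A) : ∃ v, v ≠ 0 ∧ A *ᵥ v = μ • v := by
  rw [← spectrum_toLin', ← Module.End.hasEigenvalue_iff_mem_spectrum] at hμ
  obtain ⟨v, hv, hv0⟩ := hμ.exists_hasEigenvector
  exact ⟨v, hv0, by simpa using Module.End.mem_eigenspace_iff.mp hv⟩

lemma star_mem_spectrum_conjTranspose [DecidableEq n] {A : Matrix n n 𝕜} {μ : 𝕜}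
    (hμ : μ ∈ spectrum 𝕜 A) : star μ ∈ spectrum 𝕜 Aᴴ := by
  rw [← star_eq_conjTranspose, spectrum.map_star, Set.mem_star, star_star]
  exact hμ

theorem mul_norm_sq_le_one_of_smul_mul_mul_conjTranspose_le [DecidableEq n] {A P : Matrix n n 𝕜}
    {c : ℝ} (hP : P.PosDef) (h : c • (A * P * Aᴴ) ≤ P) {μ : 𝕜} (hμ : μ ∈ spectrum 𝕜 A) :
    c * ‖μ‖ ^ 2 ≤ 1 := by
  obtain ⟨w, hw0, hw⟩ :=
    exists_mulVec_eq_smul_of_mem_spectrum (star_mem_spectrum_conjTranspose hμ)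
  obtain ⟨q, hq, hqw⟩ := RCLike.pos_iff_exists_ofReal.mp (hP.dotProduct_mulVec_pos hw0)
  have hquad : star w ⬝ᵥ ((A * P * Aᴴ) *ᵥ w) = ((‖μ‖ ^ 2 * q : ℝ) : 𝕜) := by
    have hleft : star w ᵥ* A = μ • star w := by simpa [star_mulVec] using congrArg star hw
    rw [← mulVec_mulVec, ← mulVec_mulVec, hw, dotProduct_mulVec, hleft,
      mulVec_smul, smul_dotProduct, dotProduct_smul, ← hqw]
    simp [smul_eq_mul, ← mul_assoc, RCLike.mul_conj]
  have hform := h.dotProduct_mulVec_nonneg w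
  rw [sub_mulVec, dotProduct_sub, smul_mulVec, dotProduct_smul, hquad, ← hqw,
    RCLike.real_smul_eq_coe_mul, ← RCLike.ofReal_mul, ← RCLike.ofReal_sub,
    RCLike.ofReal_nonneg] at hform
  nlinarith

theorem mul_norm_sq_le_one_of_smul_mul_mul_transpose_le [DecidableEq n] {A P : Matrix n n ℝ}
    {c : ℝ} (hP : P.PosDef) (h : c • (A * P * Aᵀ) ≤ P) {μ : 𝕜}
    (hμ : μ ∈ spectrum 𝕜 (A.map (algebraMap ℝ 𝕜))) : c * ‖μ‖ ^ 2 ≤ 1 := by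
  refine mul_norm_sq_le_one_of_smul_mul_mul_conjTranspose_le hP.map_algebraMap ?_ hμ
  have := PosSemidef.map_algebraMap (𝕜 := 𝕜) h
  have hAconj : (A.map (algebraMap ℝ 𝕜))ᴴ = Aᵀ.map (algebraMap ℝ 𝕜) := by ext; simp
  rw [le_iff, hAconj]
  convert this using 1
  simp [Matrix.map_sub, Matrix.map_mul, Matrix.map_smul]

end Matrix

lemma smul_le_of_sum_smul_add_le {ι M : Type*} [Fintype ι] [AddCommMonoid M] [PartialOrder M]
    [IsOrderedAddMonoid M] [Module ℝ M] [PosSMulMono ℝ M] {c : ι → ℝ} {G : ι → M} {K P : M}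
    (hc : 0 ≤ c) (hG : 0 ≤ G) (hK : 0 ≤ K) (h : ∑ i, c i • (G i + K) ≤ P) (j : ι) :
    c j • G j ≤ P :=
  calc c j • G j ≤ c j • (G j + K) :=
        smul_le_smul_of_nonneg_left (le_add_of_nonneg_right hK) (hc j)
    _ ≤ ∑ i, c i • (G i + K) :=
        Finset.single_le_sum (fun i _ ↦ smul_nonneg (hc i) (add_nonneg (hG i) hK))
          (Finset.mem_univ j)
    _ ≤ P := h

theorem stmt_9_general (r n nw m : ℕ)
    (p : Fin (r + 1) → Fin (r + 1) → ℝ) (π : Fin (r + 1) → ℝ)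
    (hp0 : ∀ i j, 0 ≤ p i j)
    (hπpos : ∀ j, 0 < π j)
    (Abar : Matrix (Fin n) (Fin n) ℝ) (Bbar : Matrix (Fin n) (Fin nw) ℝ)
    (Wm : Matrix (Fin nw) (Fin nw) ℝ) (hWm : Wm.PosSemidef)
    (Vm : Matrix (Fin m) (Fin m) ℝ)
    (Cbar : Matrix (Fin m) (Fin n) ℝ)
    (ψ : Fin (r + 1) → Matrix (Fin m) (Fin m) ℝ)
    (L : Fin (r + 1) → Matrix (Fin n) (Fin m) ℝ)
    (F : Fin (r + 1) → Matrix (Fin n) (Fin n) ℝ)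
    (hF : ∀ j, F j = 1 - L j * ψ j * Cbar)
    (X : Fin (r + 1) → Matrix (Fin n) (Fin m) ℝ)
    (hX : ∀ j, X j = L j * ψ j)
    (hfeas : ∃ Pmat : Fin (r + 1) → Matrix (Fin n) (Fin n) ℝ,
      (∀ j, (Pmat j).IsSymm) ∧ (∀ j, (Pmat j).PosDef) ∧
      (∀ j, (Pmat j - ∑ i, (p i j * (π i / π j)) •
        (F j * (Abar * Pmat i * Abarᵀ + Bbar * Wm * Bbarᵀ) * (F j)ᵀ
          + X j * Vm * (X j)ᵀ)).PosSemidef))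
    (j : Fin (r + 1)) (hψ : ψ j = 0)
    (lam : ℂ) (hlam : lam ∈ spectrum ℂ (Abar.map (algebraMap ℝ ℂ))) :
    p j j * ‖lam‖ ^ 2 ≤ 1 := by
  obtain ⟨P, -, hP, hineq⟩ := hfeas
  refine mul_norm_sq_le_one_of_smul_mul_mul_transpose_le (hP j) ?_ hlam
  have hFj : F j = 1 := by simp [hF, hψ]
  have hXj : X j = 0 := by simp [hX, hψ]
  have hcoef : p j j = p j j * (π j / π j) := by rw [div_self (hπpos j).ne', mul_one]
  have hconj : ∀ {k} (M : Matrix (Fin k) (Fin k) ℝ) (B : Matrix (Fin n) (Fin k) ℝ),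
      0 ≤ M → 0 ≤ B * M * Bᵀ := fun M B hM ↦
    (conjTranspose_eq_transpose_of_trivial B ▸ hM.posSemidef.mul_mul_conjTranspose_same B).nonneg
  rw [hcoef]
  refine smul_le_of_sum_smul_add_le (c := fun i ↦ p i j * (π i / π j)) (fun i ↦ ?_)
    (fun i ↦ hconj (P i) Abar (hP i).posSemidef.nonneg) (hconj Wm Bbar hWm.nonneg) ?_ j
  · exact mul_nonneg (hp0 i j) (div_nonneg (hπpos i).le (hπpos j).le)
  · simpa [hFj, hXj] using (hineq j).nonneg

/-- Theorem 2 of the paper, condition (16a): if the coupled covariance inequality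
`𝔈_j(P₀,…,P_r) ⪯ P_j` is feasible with symmetric positive definite matrices, then for
every mode `j` with no received measurement (`ψ_j = 0`) and every eigenvalue `λ` of `Ā`,
one has `p j j * |λ|² ≤ 1`. -/
theorem stmt_9 (r n nw m : ℕ)
    (p : Fin (r + 1) → Fin (r + 1) → ℝ) (π : Fin (r + 1) → ℝ)
    (hp0 : ∀ i j, 0 ≤ p i j) (hp1 : ∀ i, ∑ j, p i j = 1)
    (hπpos : ∀ j, 0 < π j) (hπ1 : ∑ j, π j = 1)
    (hstat : ∀ j, ∑ i, π i * p i j = π j)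
    (Abar : Matrix (Fin n) (Fin n) ℝ) (Bbar : Matrix (Fin n) (Fin nw) ℝ)
    (Wm : Matrix (Fin nw) (Fin nw) ℝ) (hWm : Wm.PosSemidef)
    (Vm : Matrix (Fin m) (Fin m) ℝ) (hVm : Vm.PosSemidef)
    (Cbar : Matrix (Fin m) (Fin n) ℝ)
    (ψ : Fin (r + 1) → Matrix (Fin m) (Fin m) ℝ)
    (L : Fin (r + 1) → Matrix (Fin n) (Fin m) ℝ)
    (F : Fin (r + 1) → Matrix (Fin n) (Fin n) ℝ)
    (hF : ∀ j, F j = 1 - L j * ψ j * Cbar)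
    (X : Fin (r + 1) → Matrix (Fin n) (Fin m) ℝ)
    (hX : ∀ j, X j = L j * ψ j)
    (hfeas : ∃ Pmat : Fin (r + 1) → Matrix (Fin n) (Fin n) ℝ,
      (∀ j, (Pmat j).IsSymm) ∧ (∀ j, (Pmat j).PosDef) ∧
      (∀ j, (Pmat j - ∑ i, (p i j * (π i / π j)) •
        (F j * (Abar * Pmat i * Abarᵀ + Bbar * Wm * Bbarᵀ) * (F j)ᵀ
          + X j * Vm * (X j)ᵀ)).PosSemidef))
    (j : Fin (r + 1)) (hψ : ψ j = 0)
    (lam : ℂ) (hlam : lam ∈ spectrum ℂ (Abar.map (algebraMap ℝ ℂ))) :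
    p j j * ‖lam‖ ^ 2 ≤ 1 :=
  stmt_9_general r n nw m p π hp0 hπpos Abar Bbar Wm hWm Vm Cbar ψ L F hF X hX hfeas j hψ lam hlam
end

section
/- (Theorem 2, condition (16b).) Let r ∈ ℕ and J = Fin (r+1); let p : J → J → ℝ be row-stochastic (p i j ≥ 0, ∑_j p i j = 1) with stationary distribution π (π j > 0, ∑_j π j = 1, ∑_i π i · p i j = π j). Let Ā be an n×n real matrix, B̄ an n×n_w real matrix, W an n_w×n_w real positive semidefinite matrix, V an m×m real positive semidefinite matrix, C̄ an m×n real matrix, and for each j ∈ J let ψ_j be an m×m real matrix and L_j an n×m real matrix; set F_j = I − L_j ψ_j C̄ and X_j = L_j ψ_j, and define the coupled operator 𝔈_j(P₀, …, P_r) = ∑_{i ∈ J} p i j · (π i / π j) · ( F_j (Ā P_i Āᵀ + B̄ W B̄ᵀ) F_jᵀ + X_j V X_jᵀ ). Suppose there exist real symmetric positive definite matrices P₀, …, P_r such that 𝔈_j(P₀, …, P_r) ≺ P_j (strict Loewner inequality) for every j ∈ J. Then for every j ∈ J, every λ ∈ ℂ and every nonzero x ∈ ℂⁿ such that Ā x =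 λ x and ψ_j C̄ Ā x = 0 (acting via entrywise complexifications), one has p j j · |λ|² < 1. -/
open Matrix

namespace Stmt10Helper

variable {N : ℕ}

/-- The real part of the complex quadratic form of (the complexification of) a real matrix. -/
noncomputable def qf (z : Fin N → ℂ) (M : Matrix (Fin N) (Fin N) ℝ) : ℝ :=
  (star z ⬝ᵥ (M.map (algebraMap ℝ ℂ)) *ᵥ z).re

lemma map_add' (A B : Matrix (Fin N) (Fin N) ℝ) :
    (A + B).map (algebraMap ℝ ℂ) = A.map (algebraMap ℝ ℂ) + B.map (algebraMap ℝ ℂ) := by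
  ext i k; simp [Matrix.map_apply]

lemma map_sub' (A B : Matrix (Fin N) (Fin N) ℝ) :
    (A - B).map (algebraMap ℝ ℂ) = A.map (algebraMap ℝ ℂ) - B.map (algebraMap ℝ ℂ) := by
  ext i k; simp [Matrix.map_apply]

lemma qf_add (z : Fin N → ℂ) (A B : Matrix (Fin N) (Fin N) ℝ) :
    qf z (A + B) = qf z A + qf z B := by
  unfold qf
  rw [map_add', add_mulVec, dotProduct_add, Complex.add_re]

lemma qf_sub (z : Fin N → ℂ) (A B : Matrix (Fin N) (Fin N) ℝ) :
    qf z (A - B) = qf z A - qf z B := by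
  unfold qf
  rw [map_sub', sub_mulVec, dotProduct_sub, Complex.sub_re]

lemma qf_zero (z : Fin N → ℂ) : qf z (0 : Matrix (Fin N) (Fin N) ℝ) = 0 := by
  unfold qf
  have : (0 : Matrix (Fin N) (Fin N) ℝ).map (algebraMap ℝ ℂ) = 0 := by
    ext i k; simp [Matrix.map_apply]
  rw [this]
  simp

lemma qf_sum (z : Fin N → ℂ) {ι : Type*} (s : Finset ι)
    (f : ι → Matrix (Fin N) (Fin N) ℝ) :
    qf z (∑ i ∈ s, f i) = ∑ i ∈ s, qf z (f i) := by
  induction s using Finset.cons_induction with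
  | empty => simp [qf_zero]
  | cons a s ha ih => rw [Finset.sum_cons, Finset.sum_cons, qf_add, ih]

lemma qf_smul (z : Fin N → ℂ) (c : ℝ) (M : Matrix (Fin N) (Fin N) ℝ) :
    qf z (c • M) = c * qf z M := by
  unfold qf
  have : (c • M).map (algebraMap ℝ ℂ) = (c : ℂ) • M.map (algebraMap ℝ ℂ) := by
    ext i k; simp [Matrix.map_apply]
  rw [this, smul_mulVec, dotProduct_smul, smul_eq_mul, Complex.re_ofReal_mul]

lemma qf_decomp (z : Fin N → ℂ) (M : Matrix (Fin N) (Fin N) ℝ) :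
    qf z M = (fun i => (z i).re) ⬝ᵥ M *ᵥ (fun i => (z i).re)
      + (fun i => (z i).im) ⬝ᵥ M *ᵥ (fun i => (z i).im) := by
  simp only [qf, dotProduct, mulVec, Matrix.map_apply, Finset.mul_sum, Complex.re_sum,
    Pi.star_apply]
  rw [← Finset.sum_add_distrib]
  refine Finset.sum_congr rfl fun i _ => ?_
  rw [← Finset.sum_add_distrib]
  refine Finset.sum_congr rfl fun k _ => ?_
  have halg : (algebraMap ℝ ℂ) (M i k) = ((M i k : ℝ) : ℂ) := rfl
  simp only [halg, Complex.star_def, Complex.mul_re, Complex.mul_im, Complex.conj_re,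
    Complex.conj_im, Complex.ofReal_re, Complex.ofReal_im]
  ring

lemma qf_nonneg (z : Fin N → ℂ) {M : Matrix (Fin N) (Fin N) ℝ} (hM : M.PosSemidef) :
    0 ≤ qf z M := by
  rw [qf_decomp]
  have h1 := hM.dotProduct_mulVec_nonneg (fun i => (z i).re)
  have h2 := hM.dotProduct_mulVec_nonneg (fun i => (z i).im)
  simp only [star_trivial] at h1 h2
  linarith

lemma qf_pos (z : Fin N → ℂ) {M : Matrix (Fin N) (Fin N) ℝ} (hM : M.PosDef)
    (hz : z ≠ 0) : 0 < qf z M := by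
  rw [qf_decomp]
  have hz' : (fun i => (z i).re) ≠ 0 ∨ (fun i => (z i).im) ≠ 0 := by
    by_contra h
    push_neg at h
    apply hz
    funext i
    have h1 := congrFun h.1 i
    have h2 := congrFun h.2 i
    simp only [Pi.zero_apply] at h1 h2
    exact Complex.ext h1 h2
  rcases hz' with h | h
  · have h1 := hM.dotProduct_mulVec_pos h
    have h2 := hM.posSemidef.dotProduct_mulVec_nonneg (fun i => (z i).im)
    simp only [star_trivial] at h1 h2
    linarith
  · have h1 := hM.posSemidef.dotProduct_mulVec_nonneg (fun i => (z i).re)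
    have h2 := hM.dotProduct_mulVec_pos h
    simp only [star_trivial] at h1 h2
    linarith

lemma transpose_map_eq (A : Matrix (Fin N) (Fin N) ℝ) :
    Aᵀ.map (algebraMap ℝ ℂ) = (A.map (algebraMap ℝ ℂ))ᴴ := by
  ext i k
  simp [Matrix.map_apply, Matrix.conjTranspose_apply, Complex.conj_ofReal]

lemma qf_conj (z : Fin N → ℂ) (Nm A : Matrix (Fin N) (Fin N) ℝ) :
    qf z (Nm * A * Nmᵀ) = qf ((Nm.map (algebraMap ℝ ℂ))ᴴ *ᵥ z) A := by
  unfold qf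
  congr 1
  rw [Matrix.map_mul, Matrix.map_mul, transpose_map_eq]
  set B := Nm.map (algebraMap ℝ ℂ)
  set Ac := A.map (algebraMap ℝ ℂ)
  rw [← mulVec_mulVec, ← mulVec_mulVec]
  rw [star_mulVec, conjTranspose_conjTranspose]
  rw [dotProduct_mulVec]

lemma qf_smul_vec (c : ℂ) (z : Fin N → ℂ) (M : Matrix (Fin N) (Fin N) ℝ) :
    qf (c • z) M = Complex.normSq c * qf z M := by
  unfold qf
  rw [star_smul, smul_dotProduct, mulVec_smul, dotProduct_smul]
  simp only [smul_eq_mul, ← mul_assoc]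
  have hsc : star c * c = (Complex.normSq c : ℂ) := by
    rw [Complex.star_def, mul_comm, Complex.mul_conj]
  rw [hsc, Complex.re_ofReal_mul]

lemma exists_left_eigvec (B : Matrix (Fin N) (Fin N) ℂ) (lam : ℂ) (x : Fin N → ℂ)
    (hx : x ≠ 0) (h : B *ᵥ x = lam • x) :
    ∃ z : Fin N → ℂ, z ≠ 0 ∧ Bᴴ *ᵥ z = (starRingEnd ℂ) lam • z := by
  have hdet : (B - lam • 1).det = 0 := by
    rw [← Matrix.exists_mulVec_eq_zero_iff]
    refine ⟨x, hx, ?_⟩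
    rw [sub_mulVec, h, smul_mulVec, one_mulVec, sub_self]
  have hdet2 : (Bᴴ - (starRingEnd ℂ) lam • 1).det = 0 := by
    have heq : Bᴴ - (starRingEnd ℂ) lam • 1 = (B - lam • 1)ᴴ := by
      rw [conjTranspose_sub, conjTranspose_smul, conjTranspose_one]
      rfl
    rw [heq, det_conjTranspose, hdet, star_zero]
  obtain ⟨z, hz0, hz⟩ := Matrix.exists_mulVec_eq_zero_iff.mpr hdet2
  refine ⟨z, hz0, ?_⟩
  rw [sub_mulVec, smul_mulVec, one_mulVec, sub_eq_zero] at hz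
  exact hz

end Stmt10Helper

open Stmt10Helper

/-- Theorem 2 of the paper, condition (16b): if the strict coupled covariance inequality
`𝔈_j(P₀,…,P_r) ≺ P_j` is feasible with symmetric positive definite matrices, then for
every mode `j` and every eigenvalue `λ` of `Ā` whose eigenvector `x` is unobservable in
mode `j` (`ψ_j C̄ Ā x = 0`), one has `p j j * |λ|² < 1`. -/
theorem stmt_10 (r n nw m : ℕ)
    (p : Fin (r + 1) → Fin (r + 1) → ℝ) (π : Fin (r + 1) → ℝ)
    (hp0 : ∀ i j, 0 ≤ p i j) (hp1 : ∀ i, ∑ j, p i j = 1)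
    (hπpos : ∀ j, 0 < π j) (hπ1 : ∑ j, π j = 1)
    (hstat : ∀ j, ∑ i, π i * p i j = π j)
    (Abar : Matrix (Fin n) (Fin n) ℝ) (Bbar : Matrix (Fin n) (Fin nw) ℝ)
    (Wm : Matrix (Fin nw) (Fin nw) ℝ) (hWm : Wm.PosSemidef)
    (Vm : Matrix (Fin m) (Fin m) ℝ) (hVm : Vm.PosSemidef)
    (Cbar : Matrix (Fin m) (Fin n) ℝ)
    (ψ : Fin (r + 1) → Matrix (Fin m) (Fin m) ℝ)
    (L : Fin (r + 1) → Matrix (Fin n) (Fin m) ℝ)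
    (F : Fin (r + 1) → Matrix (Fin n) (Fin n) ℝ)
    (hF : ∀ j, F j = 1 - L j * ψ j * Cbar)
    (X : Fin (r + 1) → Matrix (Fin n) (Fin m) ℝ)
    (hX : ∀ j, X j = L j * ψ j)
    (hfeas : ∃ Pmat : Fin (r + 1) → Matrix (Fin n) (Fin n) ℝ,
      (∀ j, (Pmat j).IsSymm) ∧ (∀ j, (Pmat j).PosDef) ∧
      (∀ j, (Pmat j - ∑ i, (p i j * (π i / π j)) •
        (F j * (Abar * Pmat i * Abarᵀ + Bbar * Wm * Bbarᵀ) * (F j)ᵀ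
          + X j * Vm * (X j)ᵀ)).PosDef))
    (j : Fin (r + 1))
    (lam : ℂ) (x : Fin n → ℂ) (hx : x ≠ 0)
    (hAx : (Abar.map (algebraMap ℝ ℂ)).mulVec x = lam • x)
    (hobs : ((ψ j * Cbar * Abar).map (algebraMap ℝ ℂ)).mulVec x = 0) :
    p j j * ‖lam‖ ^ 2 < 1 := by
  obtain ⟨P, hsym, hPD, hstrict⟩ := hfeas
  -- the closed-loop matrix in mode j
  set Nm : Matrix (Fin n) (Fin n) ℝ := F j * Abar with hNdef
  -- x is an eigenvector of Nm over ℂ with eigenvalue lam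
  have hNx : (Nm.map (algebraMap ℝ ℂ)) *ᵥ x = lam • x := by
    have hNeq : Nm = Abar - L j * (ψ j * Cbar * Abar) := by
      rw [hNdef, hF j, Matrix.sub_mul, Matrix.one_mul, Matrix.mul_assoc, Matrix.mul_assoc,
        Matrix.mul_assoc]
    rw [hNeq]
    have hmap : (Abar - L j * (ψ j * Cbar * Abar)).map (algebraMap ℝ ℂ)
        = Abar.map (algebraMap ℝ ℂ)
          - (L j).map (algebraMap ℝ ℂ) * ((ψ j * Cbar * Abar).map (algebraMap ℝ ℂ)) := by
      rw [← Matrix.map_mul]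
      ext i k
      simp [Matrix.map_apply]
    rw [hmap, sub_mulVec, ← mulVec_mulVec, hobs, hAx, Matrix.mulVec_zero, sub_zero]
  -- get a left eigenvector z of Nm with eigenvalue conj lam
  obtain ⟨z, hz0, hz⟩ := exists_left_eigvec (Nm.map (algebraMap ℝ ℂ)) lam x hx hNx
  -- the key congruence identity
  have hkey : ∀ A : Matrix (Fin n) (Fin n) ℝ,
      qf z (Nm * A * Nmᵀ) = ‖lam‖ ^ 2 * qf z A := by
    intro A
    rw [qf_conj, hz, qf_smul_vec, Complex.normSq_conj, ← Complex.sq_norm]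
  -- positive semidefiniteness of all the terms
  have hTpsd : ∀ i : Fin (r + 1),
      (F j * (Abar * P i * Abarᵀ + Bbar * Wm * Bbarᵀ) * (F j)ᵀ
        + X j * Vm * (X j)ᵀ).PosSemidef := by
    intro i
    have h1 : (Abar * P i * Abarᵀ + Bbar * Wm * Bbarᵀ).PosSemidef := by
      have ha := (hPD i).posSemidef.mul_mul_conjTranspose_same Abar
      have hb := hWm.mul_mul_conjTranspose_same Bbar
      rw [conjTranspose_eq_transpose_of_trivial] at ha hb
      exact ha.add hb
    have h2 := h1.mul_mul_conjTranspose_same (F j)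
    have h3 := hVm.mul_mul_conjTranspose_same (X j)
    rw [conjTranspose_eq_transpose_of_trivial] at h2 h3
    exact h2.add h3
  have hrest : (F j * (Bbar * Wm * Bbarᵀ) * (F j)ᵀ + X j * Vm * (X j)ᵀ).PosSemidef := by
    have hb := hWm.mul_mul_conjTranspose_same Bbar
    rw [conjTranspose_eq_transpose_of_trivial] at hb
    have h2 := hb.mul_mul_conjTranspose_same (F j)
    have h3 := hVm.mul_mul_conjTranspose_same (X j)
    rw [conjTranspose_eq_transpose_of_trivial] at h2 h3
    exact h2.add h3
  -- nonnegativity of the coefficients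
  have hcnn : ∀ i, 0 ≤ p i j * (π i / π j) := fun i =>
    mul_nonneg (hp0 i j) (div_nonneg (hπpos i).le (hπpos j).le)
  -- strict inequality of quadratic forms
  have hq : 0 < qf z (P j - ∑ i, (p i j * (π i / π j)) •
      (F j * (Abar * P i * Abarᵀ + Bbar * Wm * Bbarᵀ) * (F j)ᵀ
        + X j * Vm * (X j)ᵀ)) := qf_pos z (hstrict j) hz0
  rw [qf_sub, qf_sum] at hq
  simp_rw [qf_smul] at hq
  -- the sum dominates the j-th term
  have hsum_ge : (p j j * (π j / π j)) * qf z
      (F j * (Abar * P j * Abarᵀ + Bbar * Wm * Bbarᵀ) * (F j)ᵀ + X j * Vm * (X j)ᵀ)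
      ≤ ∑ i, (p i j * (π i / π j)) * qf z
      (F j * (Abar * P i * Abarᵀ + Bbar * Wm * Bbarᵀ) * (F j)ᵀ + X j * Vm * (X j)ᵀ) :=
    Finset.single_le_sum (fun i _ => mul_nonneg (hcnn i) (qf_nonneg z (hTpsd i)))
      (Finset.mem_univ j)
  have hπjj : π j / π j = 1 := div_self (hπpos j).ne'
  -- the j-th term dominates |lam|^2 qf z (P j)
  have hTj : ‖lam‖ ^ 2 * qf z (P j) ≤ qf z
      (F j * (Abar * P j * Abarᵀ + Bbar * Wm * Bbarᵀ) * (F j)ᵀ + X j * Vm * (X j)ᵀ) := by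
    have hsplit : F j * (Abar * P j * Abarᵀ + Bbar * Wm * Bbarᵀ) * (F j)ᵀ
        + X j * Vm * (X j)ᵀ
        = Nm * P j * Nmᵀ
          + (F j * (Bbar * Wm * Bbarᵀ) * (F j)ᵀ + X j * Vm * (X j)ᵀ) := by
      rw [hNdef, Matrix.transpose_mul]
      noncomm_ring
    rw [hsplit, qf_add, hkey]
    have h0 := qf_nonneg z hrest
    linarith
  have hPj : 0 < qf z (P j) := qf_pos z (hPD j) hz0
  -- assemble everything
  have hfin : (p j j * ‖lam‖ ^ 2) * qf z (P j) < 1 * qf z (P j) := by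
    rw [one_mul]
    calc (p j j * ‖lam‖ ^ 2) * qf z (P j)
        = p j j * (‖lam‖ ^ 2 * qf z (P j)) := by ring
      _ ≤ p j j * qf z
          (F j * (Abar * P j * Abarᵀ + Bbar * Wm * Bbarᵀ) * (F j)ᵀ + X j * Vm * (X j)ᵀ) :=
          mul_le_mul_of_nonneg_left hTj (hp0 j j)
      _ = (p j j * (π j / π j)) * qf z
          (F j * (Abar * P j * Abarᵀ + Bbar * Wm * Bbarᵀ) * (F j)ᵀ + X j * Vm * (X j)ᵀ) := by
          rw [hπjj, mul_one]
      _ ≤ ∑ i, (p i j * (π i / π j)) * qf z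
          (F j * (Abar * P i * Abarᵀ + Bbar * Wm * Bbarᵀ) * (F j)ᵀ + X j * Vm * (X j)ᵀ) :=
          hsum_ge
      _ < qf z (P j) := by linarith
  exact lt_of_mul_lt_mul_right hfin hPj.le
end

section
/- (Boundedness of the covariance iteration.) Let r ∈ ℕ and J = Fin (r+1); let p : J → J → ℝ satisfy p i j ≥ 0 and let π : J → ℝ satisfy π j > 0 for all j. Let Ā be an n×n real matrix, B̄ an n×n_w real matrix, W an n_w×n_w real positive semidefinite matrix, V an m×m real positive semidefinite matrix, and for each j ∈ J let F_j (n×n) and X_j (n×m) be real matrices; define 𝔈_j(P₀, …, P_r) = ∑_{i ∈ J} p i j · (π i / π j) · ( F_j (Ā P_i Āᵀ + B̄ W B̄ᵀ) F_jᵀ + X_j V X_jᵀ ). Suppose there exist real symmetric positive semidefinite matrices P*₀, …, P*_r with 𝔈_j(P*₀, …, P*_r) ⪯ P*_j for all j ∈ J. Let (P_j[k])_{j ∈ J, k ∈ ℕ} be defined by the iteration P_j[k] = 𝔈_j(P₀[k−1], …, P_r[k−1]) for k ≥ 1, from symmetric initial matrices satisfying P_i[0] ⪯ P*_i for all i ∈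 J. Then for all k ∈ ℕ and all j ∈ J, P_j[k] ⪯ P*_j; consequently trace(∑_{j ∈ J} π j · P_j[k]) ≤ trace(∑_{j ∈ J} π j · P*_j) for all k. -/
/-!
The coupled operator `𝔈` is monotone for the Loewner order: its dependence on `P` is through
the congruences `P_i ↦ (F_j Ā) P_i (F_j Ā)ᵀ` weighted by the nonnegative numbers
`p i j * (π i / π j)`, while the noise terms do not depend on `P`. Hence from `P[0] ⪯ P*` and
`𝔈(P*) ⪯ P*` induction gives `P[k+1] = 𝔈(P[k]) ⪯ 𝔈(P*) ⪯ P*`, and the trace bound follows because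
the trace is a positive linear functional.
-/

open Matrix
open scoped MatrixOrder

theorem Monotone.seq_le_of_map_le {α : Type*} [Preorder α] {f : α → α} (hf : Monotone f)
    {x : α} (hx : f x ≤ x) {y : ℕ → α} (h0 : y 0 ≤ x) (hy : ∀ k, y (k + 1) = f (y k)) :
    ∀ k, y k ≤ x
  | 0 => h0
  | k + 1 => hy k ▸ (hf (hf.seq_le_of_map_le hx h0 hy k)).trans hx

theorem Matrix.mul_mul_transpose_le_mul_mul_transpose {m n : Type*} [Fintype m] [Fintype n]
    {A B : Matrix n n ℝ} (h : A ≤ B) (C : Matrix m n ℝ) : C * A * Cᵀ ≤ C * B * Cᵀ := by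
  rw [le_iff, ← Matrix.sub_mul, ← Matrix.mul_sub]
  simpa using (le_iff.mp h).mul_mul_conjTranspose_same C

section CoupledCovariance

variable {ι n nw m : Type*} [Fintype ι] [Fintype n] [Fintype nw] [Fintype m]
  (p : ι → ι → ℝ) (π : ι → ℝ) (Abar : Matrix n n ℝ) (Bbar : Matrix n nw ℝ)
  (Wm : Matrix nw nw ℝ) (Vm : Matrix m m ℝ) (F : ι → Matrix n n ℝ) (X : ι → Matrix n m ℝ)

/-- The coupled operator `𝔈` of the modal covariance recursion (14). -/
noncomputable def coupledCovariance (P : ι → Matrix n n ℝ) (j : ι) : Matrix n n ℝ :=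
  ∑ i, (p i j * (π i / π j)) •
    (F j * (Abar * P i * Abarᵀ + Bbar * Wm * Bbarᵀ) * (F j)ᵀ + X j * Vm * (X j)ᵀ)

variable {p π} in
theorem monotone_coupledCovariance (hp : ∀ i j, 0 ≤ p i j) (hπ : ∀ i, 0 ≤ π i) :
    Monotone (coupledCovariance p π Abar Bbar Wm Vm F X) := by
  intro P Q hPQ j
  refine Finset.sum_le_sum fun i _ ↦
    smul_le_smul_of_nonneg_left ?_ (mul_nonneg (hp i j) (div_nonneg (hπ i) (hπ j)))
  have hconj : Abar * P i * Abarᵀ ≤ Abar * Q i * Abarᵀ :=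
    mul_mul_transpose_le_mul_mul_transpose (hPQ i) Abar
  exact add_le_add_left (mul_mul_transpose_le_mul_mul_transpose (add_le_add_left hconj _) _) _

end CoupledCovariance

theorem stmt_12_general (r n nw m : ℕ)
    (p : Fin (r + 1) → Fin (r + 1) → ℝ) (π : Fin (r + 1) → ℝ)
    (hp0 : ∀ i j, 0 ≤ p i j) (hπpos : ∀ j, 0 < π j)
    (Abar : Matrix (Fin n) (Fin n) ℝ) (Bbar : Matrix (Fin n) (Fin nw) ℝ)
    (Wm : Matrix (Fin nw) (Fin nw) ℝ)
    (Vm : Matrix (Fin m) (Fin m) ℝ)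
    (F : Fin (r + 1) → Matrix (Fin n) (Fin n) ℝ)
    (X : Fin (r + 1) → Matrix (Fin n) (Fin m) ℝ)
    (Pstar : Fin (r + 1) → Matrix (Fin n) (Fin n) ℝ)
    (hPstarFix : ∀ j, (Pstar j - ∑ i, (p i j * (π i / π j)) •
      (F j * (Abar * Pstar i * Abarᵀ + Bbar * Wm * Bbarᵀ) * (F j)ᵀ
        + X j * Vm * (X j)ᵀ)).PosSemidef)
    (Pit : ℕ → Fin (r + 1) → Matrix (Fin n) (Fin n) ℝ)
    (hinit : ∀ i, (Pstar i - Pit 0 i).PosSemidef)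
    (hiter : ∀ k j, Pit (k + 1) j = ∑ i, (p i j * (π i / π j)) •
      (F j * (Abar * Pit k i * Abarᵀ + Bbar * Wm * Bbarᵀ) * (F j)ᵀ
        + X j * Vm * (X j)ᵀ)) :
    (∀ k j, (Pstar j - Pit k j).PosSemidef) ∧
    (∀ k : ℕ, (∑ j, π j • Pit k j).trace ≤ (∑ j, π j • Pstar j).trace) := by
  have hmono : Monotone (coupledCovariance p π Abar Bbar Wm Vm F X) :=
    monotone_coupledCovariance Abar Bbar Wm Vm F X hp0 fun j ↦ (hπpos j).le
  have hbelow : ∀ k, Pit k ≤ Pstar :=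
    hmono.seq_le_of_map_le (fun j ↦ le_iff.mpr (hPstarFix j)) (fun i ↦ le_iff.mpr (hinit i))
      fun k ↦ funext (hiter k)
  refine ⟨fun k j ↦ le_iff.mp (hbelow k j), fun k ↦ ?_⟩
  have hweighted : ∑ j, π j • Pit k j ≤ ∑ j, π j • Pstar j :=
    Finset.sum_le_sum fun j _ ↦ smul_le_smul_of_nonneg_left (hbelow k j) (hπpos j).le
  exact (tracePositiveLinearMap (Fin n) ℝ ℝ).monotone' hweighted

/-- Boundedness of the coupled covariance iteration: if the coupled operator `𝔈` admits a
Loewner sub-fixed-point `P*` (symmetric positive semidefinite with `𝔈_j(P*) ⪯ P*_j`),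
then the iteration `P_j[k] = 𝔈_j(P[k-1])` started below `P*` stays below `P*` for all
`k`; consequently the expected covariance index `trace(∑ j, π j • P_j[k])` is bounded by
`trace(∑ j, π j • P*_j)`. -/
theorem stmt_12 (r n nw m : ℕ)
    (p : Fin (r + 1) → Fin (r + 1) → ℝ) (π : Fin (r + 1) → ℝ)
    (hp0 : ∀ i j, 0 ≤ p i j) (hπpos : ∀ j, 0 < π j)
    (Abar : Matrix (Fin n) (Fin n) ℝ) (Bbar : Matrix (Fin n) (Fin nw) ℝ)
    (Wm : Matrix (Fin nw) (Fin nw) ℝ) (hWm : Wm.PosSemidef)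
    (Vm : Matrix (Fin m) (Fin m) ℝ) (hVm : Vm.PosSemidef)
    (F : Fin (r + 1) → Matrix (Fin n) (Fin n) ℝ)
    (X : Fin (r + 1) → Matrix (Fin n) (Fin m) ℝ)
    (Pstar : Fin (r + 1) → Matrix (Fin n) (Fin n) ℝ)
    (hPstarSymm : ∀ j, (Pstar j).IsSymm) (hPstarPsd : ∀ j, (Pstar j).PosSemidef)
    (hPstarFix : ∀ j, (Pstar j - ∑ i, (p i j * (π i / π j)) •
      (F j * (Abar * Pstar i * Abarᵀ + Bbar * Wm * Bbarᵀ) * (F j)ᵀ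
        + X j * Vm * (X j)ᵀ)).PosSemidef)
    (Pit : ℕ → Fin (r + 1) → Matrix (Fin n) (Fin n) ℝ)
    (hinitSymm : ∀ i, (Pit 0 i).IsSymm)
    (hinit : ∀ i, (Pstar i - Pit 0 i).PosSemidef)
    (hiter : ∀ k j, Pit (k + 1) j = ∑ i, (p i j * (π i / π j)) •
      (F j * (Abar * Pit k i * Abarᵀ + Bbar * Wm * Bbarᵀ) * (F j)ᵀ
        + X j * Vm * (X j)ᵀ)) :
    (∀ k j, (Pstar j - Pit k j).PosSemidef) ∧
    (∀ k : ℕ, (∑ j, π j • Pit k j).trace ≤ (∑ j, π j • Pstar j).trace) :=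
  stmt_12_general r n nw m p π hp0 hπpos Abar Bbar Wm Vm F X Pstar hPstarFix Pit hinit hiter
end

section
/- (Cardinality of the reception-scenario set, equation (9) with τ̄ ≥ d̄.) Let d̄, τ̄, n_y be natural numbers with τ̄ ≥ d̄ and n_y ≥ 1. Consider the set of functions f : Fin n_y → Fin (τ̄ + 1) → Option ℕ such that for all s, m, δ, if f s m = some δ then δ ≤ min m d̄. Then this set is finite and its cardinality equals ((d̄ + 2)! · (d̄ + 2)^{τ̄ − d̄})^{n_y}. -/
/-!
A reception history is an independent choice, for every sensor `s` and age `m`, of an entry in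
`{none} ∪ {some δ | δ ≤ min m d̄}`, a set of `min m d̄ + 2` elements; the set of histories is thus
a product of finite sets. For a single sensor the ages `m ≤ d̄` contribute
`2 · 3 ⋯ (d̄ + 2) = (d̄ + 2)!` and the remaining `τ̄ - d̄` ages contribute `d̄ + 2` each.
-/

open Finset

lemma prod_range_min_add_two {d τ : ℕ} (h : d ≤ τ) :
    ∏ m ∈ range (τ + 1), (min m d + 2) = (d + 2).factorial * (d + 2) ^ (τ - d) := by
  rw [← prod_range_mul_prod_Ico _ (show d + 1 ≤ τ + 1 by omega)]
  have hlow : ∏ m ∈ range (d + 1), (min m d + 2) = (d + 2).factorial := by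
    rw [← prod_range_add_one_eq_factorial, prod_range_succ' (fun i => i + 1), zero_add, mul_one]
    exact prod_congr rfl fun m hm => by rw [min_eq_left (by simpa [Nat.lt_succ_iff] using hm)]
  have hhigh : ∏ m ∈ Ico (d + 1) (τ + 1), (min m d + 2) = (d + 2) ^ (τ - d) := by
    rw [prod_congr rfl fun m hm => by rw [min_eq_right (by simp at hm; omega)], prod_const,
      Nat.card_Ico]
    congr 1
    omega
  rw [hlow, hhigh]

section BoundedDelays

variable {ι κ : Type*} [Fintype ι] [Fintype κ]

lemma setOf_forall_some_le_eq_piFinset [DecidableEq ι] [DecidableEq κ] (b : κ → ℕ) :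
    {f : ι → κ → Option ℕ | ∀ i k δ, f i k = some δ → δ ≤ b k} =
      ↑(Fintype.piFinset fun _ : ι => Fintype.piFinset fun k => (range (b k + 1)).insertNone) := by
  ext f
  simp [mem_insertNone]

lemma finite_setOf_forall_some_le (b : κ → ℕ) :
    {f : ι → κ → Option ℕ | ∀ i k δ, f i k = some δ → δ ≤ b k}.Finite := by
  classical
  rw [setOf_forall_some_le_eq_piFinset]
  exact finite_toSet _

lemma card_setOf_forall_some_le (b : κ → ℕ) :
    Nat.card {f : ι → κ → Option ℕ | ∀ i k δ, f i k = some δ → δ ≤ b k} =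
      (∏ k, (b k + 2)) ^ Fintype.card ι := by
  classical
  rw [setOf_forall_some_le_eq_piFinset, Nat.card_coe_set_eq, Set.ncard_coe_finset,
    Fintype.card_piFinset, prod_const, card_univ]
  simp only [Fintype.card_piFinset, card_insertNone, card_range]

end BoundedDelays

theorem stmt_13_general (dbar τbar ny : ℕ) (hτ : dbar ≤ τbar) :
    ({f : Fin ny → Fin (τbar + 1) → Option ℕ |
        ∀ (s : Fin ny) (m : Fin (τbar + 1)) (δ : ℕ),
          f s m = some δ → δ ≤ min (m : ℕ) dbar}).Finite ∧
    Nat.card {f : Fin ny → Fin (τbar + 1) → Option ℕ |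
        ∀ (s : Fin ny) (m : Fin (τbar + 1)) (δ : ℕ),
          f s m = some δ → δ ≤ min (m : ℕ) dbar}
      = ((Nat.factorial (dbar + 2)) * (dbar + 2) ^ (τbar - dbar)) ^ ny := by
  refine ⟨finite_setOf_forall_some_le _, ?_⟩
  rw [card_setOf_forall_some_le, Fintype.card_fin,
    Fin.prod_univ_eq_prod_range (fun m => min m dbar + 2), prod_range_min_add_two hτ]

/-- Cardinality of the reception-scenario set (equation (9) of the paper, case `τ̄ ≥ d̄`):
the set of reception histories `f : Fin n_y → Fin (τ̄+1) → Option ℕ`, where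
`f s m = some δ` means the measurement sent by sensor `s` exactly `m` steps ago was
accepted with end-to-end delay `δ ≤ min m d̄`, is finite with cardinality
`((d̄+2)! * (d̄+2)^(τ̄-d̄))^{n_y}`. -/
theorem stmt_13 (dbar τbar ny : ℕ) (hτ : dbar ≤ τbar) (hny : 1 ≤ ny) :
    ({f : Fin ny → Fin (τbar + 1) → Option ℕ |
        ∀ (s : Fin ny) (m : Fin (τbar + 1)) (δ : ℕ),
          f s m = some δ → δ ≤ min (m : ℕ) dbar}).Finite ∧
    Nat.card {f : Fin ny → Fin (τbar + 1) → Option ℕ |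
        ∀ (s : Fin ny) (m : Fin (τbar + 1)) (δ : ℕ),
          f s m = some δ → δ ≤ min (m : ℕ) dbar}
      = ((Nat.factorial (dbar + 2)) * (dbar + 2) ^ (τbar - dbar)) ^ ny :=
  stmt_13_general dbar τbar ny hτ
end

section
/- (Cardinality of the no-reception scenarios, Remark 3.) Let d̄, τ̄, n_y be natural numbers with τ̄ ≥ d̄ and n_y ≥ 1. Consider the set of functions f : Fin n_y → Fin (τ̄ + 1) → Option ℕ such that (i) for all s, m, δ, if f s m = some δ then δ ≤ min m d̄, and (ii) for all s and m, f s m ≠ some m (no measurement is accepted exactly at the current time instant). Then this set is finite and its cardinality equals ((d̄ + 1)! · (d̄ + 2)^{τ̄ − d̄})^{n_y}; equivalently, it equals the cardinality ((d̄ + 2)! · (d̄ + 2)^{τ̄ − d̄})^{n_y} of the full reception-scenario set divided by (d̄ + 2)^{n_y}. -/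
/-!
Conditions (i) and (ii) constrain each entry `f s m` separately, and together they say that a
received delay `δ` at lag `m` satisfies `δ < min m (d̄ + 1)`. Hence every entry ranges over `none`
and `min m (d̄ + 1)` delays, so the count is `(∏_{m ≤ τ̄} (min m (d̄ + 1) + 1)) ^ n_y`, and the
product splits at `m = d̄` into `(d̄ + 1)!` and `(d̄ + 2) ^ (τ̄ - d̄)`. The second formula follows
from `(d̄ + 2)! = (d̄ + 2) * (d̄ + 1)!`.
-/

open Finset

theorem Set.natCard_setOf_forall_mem_option {α : Type*} {s : Set α} (hs : s.Finite) :
    Nat.card {o : Option α | ∀ a ∈ o, a ∈ s} = Nat.card s + 1 := by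
  have h : {o : Option α | ∀ a ∈ o, a ∈ s} = insert none (some '' s) := by
    ext (_ | a) <;> simp
  rw [h, Nat.card_coe_set_eq, Nat.card_coe_set_eq, ncard_insert_of_notMem (by simp) (hs.image _),
    ncard_image_of_injective _ (Option.some_injective α)]

theorem Set.natCard_univ_pi {ι : Type*} [Fintype ι] {β : ι → Type*} (t : ∀ i, Set (β i)) :
    Nat.card (pi univ t) = ∏ i, Nat.card (t i) := by
  rw [Nat.card_congr (Equiv.Set.univPi t), Nat.card_pi]

theorem prod_range_min_add_one {d τ : ℕ} (h : d ≤ τ) :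
    ∏ m ∈ range (τ + 1), (min m (d + 1) + 1) = (d + 1).factorial * (d + 2) ^ (τ - d) := by
  rw [show τ + 1 = (d + 1) + (τ - d) by omega, prod_range_add]
  congr 1
  · rw [← prod_range_add_one_eq_factorial]
    exact prod_congr rfl fun i hi => by rw [min_eq_left (mem_range.mp hi).le]
  · rw [prod_congr rfl fun i _ => by rw [min_eq_right (by omega)], prod_const, card_range]

theorem Option.forall_eq_some_le_min_and_ne_some_iff {o : Option ℕ} {m d : ℕ} :
    ((∀ δ, o = some δ → δ ≤ min m d) ∧ o ≠ some m) ↔ ∀ δ ∈ o, δ ∈ Set.Iio (min m (d + 1)) := by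
  cases o
  · simp
  · simp only [some.injEq, le_inf_iff, forall_eq', ne_eq, mem_def, Set.mem_Iio, lt_inf_iff,
      Order.lt_add_one_iff]
    omega

theorem stmt_14_general (dbar τbar ny : ℕ) (hτ : dbar ≤ τbar) :
    ({f : Fin ny → Fin (τbar + 1) → Option ℕ |
        (∀ (s : Fin ny) (m : Fin (τbar + 1)) (δ : ℕ),
          f s m = some δ → δ ≤ min (m : ℕ) dbar) ∧
        (∀ (s : Fin ny) (m : Fin (τbar + 1)), f s m ≠ some (m : ℕ))}).Finite ∧
    Nat.card {f : Fin ny → Fin (τbar + 1) → Option ℕ |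
        (∀ (s : Fin ny) (m : Fin (τbar + 1)) (δ : ℕ),
          f s m = some δ → δ ≤ min (m : ℕ) dbar) ∧
        (∀ (s : Fin ny) (m : Fin (τbar + 1)), f s m ≠ some (m : ℕ))}
      = ((Nat.factorial (dbar + 1)) * (dbar + 2) ^ (τbar - dbar)) ^ ny ∧
    Nat.card {f : Fin ny → Fin (τbar + 1) → Option ℕ |
        (∀ (s : Fin ny) (m : Fin (τbar + 1)) (δ : ℕ),
          f s m = some δ → δ ≤ min (m : ℕ) dbar) ∧
        (∀ (s : Fin ny) (m : Fin (τbar + 1)), f s m ≠ some (m : ℕ))}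
      = ((Nat.factorial (dbar + 2)) * (dbar + 2) ^ (τbar - dbar)) ^ ny
          / (dbar + 2) ^ ny := by
  set S := {f : Fin ny → Fin (τbar + 1) → Option ℕ |
        (∀ (s : Fin ny) (m : Fin (τbar + 1)) (δ : ℕ),
          f s m = some δ → δ ≤ min (m : ℕ) dbar) ∧
        (∀ (s : Fin ny) (m : Fin (τbar + 1)), f s m ≠ some (m : ℕ))}
  have hS : S = Set.univ.pi fun _ => Set.univ.pi fun m : Fin (τbar + 1) =>
      {o | ∀ δ ∈ o, δ ∈ Set.Iio (min (m : ℕ) (dbar + 1))} := by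
    ext f
    simp only [S, Set.mem_pi, Set.mem_univ, true_imp_iff, ← forall_and]
    exact forall_congr' fun s => forall_congr' fun m =>
      Option.forall_eq_some_le_min_and_ne_some_iff
  have hcard : Nat.card S = ((dbar + 1).factorial * (dbar + 2) ^ (τbar - dbar)) ^ ny := by
    have hentry (m : Fin (τbar + 1)) :
        Nat.card {o : Option ℕ | ∀ δ ∈ o, δ ∈ Set.Iio (min (m : ℕ) (dbar + 1))} =
          min (m : ℕ) (dbar + 1) + 1 := by
      rw [Set.natCard_setOf_forall_mem_option (Set.finite_Iio _)]
      simp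
    simp only [hS, Set.natCard_univ_pi, hentry]
    rw [Fin.prod_univ_eq_prod_range (fun m => min m (dbar + 1) + 1), prod_range_min_add_one hτ,
      prod_const, card_univ, Fintype.card_fin]
  refine ⟨Set.finite_coe_iff.mp (Nat.finite_of_card_ne_zero (by rw [hcard]; positivity)),
    hcard, hcard.trans ?_⟩
  symm
  apply Nat.div_eq_of_eq_mul_left (by positivity)
  rw [Nat.factorial_succ (dbar + 1), mul_assoc, mul_pow, mul_comm]

/-- Cardinality of the no-reception scenarios (Remark 3 of the paper, case `τ̄ ≥ d̄`):
the set of reception histories `f : Fin n_y → Fin (τ̄+1) → Option ℕ` (with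
`f s m = some δ → δ ≤ min m d̄`) in which no measurement is accepted exactly at the
current instant (`f s m ≠ some m`) is finite with cardinality
`((d̄+1)! * (d̄+2)^(τ̄-d̄))^{n_y}`, which equals the cardinality
`((d̄+2)! * (d̄+2)^(τ̄-d̄))^{n_y}` of the full reception-scenario set divided by
`(d̄+2)^{n_y}`. -/
theorem stmt_14 (dbar τbar ny : ℕ) (hτ : dbar ≤ τbar) (hny : 1 ≤ ny) :
    ({f : Fin ny → Fin (τbar + 1) → Option ℕ |
        (∀ (s : Fin ny) (m : Fin (τbar + 1)) (δ : ℕ),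
          f s m = some δ → δ ≤ min (m : ℕ) dbar) ∧
        (∀ (s : Fin ny) (m : Fin (τbar + 1)), f s m ≠ some (m : ℕ))}).Finite ∧
    Nat.card {f : Fin ny → Fin (τbar + 1) → Option ℕ |
        (∀ (s : Fin ny) (m : Fin (τbar + 1)) (δ : ℕ),
          f s m = some δ → δ ≤ min (m : ℕ) dbar) ∧
        (∀ (s : Fin ny) (m : Fin (τbar + 1)), f s m ≠ some (m : ℕ))}
      = ((Nat.factorial (dbar + 1)) * (dbar + 2) ^ (τbar - dbar)) ^ ny ∧
    Nat.card {f : Fin ny → Fin (τbar + 1) → Option ℕ |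
        (∀ (s : Fin ny) (m : Fin (τbar + 1)) (δ : ℕ),
          f s m = some δ → δ ≤ min (m : ℕ) dbar) ∧
        (∀ (s : Fin ny) (m : Fin (τbar + 1)), f s m ≠ some (m : ℕ))}
      = ((Nat.factorial (dbar + 2)) * (dbar + 2) ^ (τbar - dbar)) ^ ny
          / (dbar + 2) ^ ny :=
  stmt_14_general dbar τbar ny hτ
end
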